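/- arXiv:1811.02259 — 15 statements merged into one kernel-verified Lean document; each statement's English description precedes it below -/
import Mathlib

section
/- For every loopless digraph G the following statements are equivalent: (1) G ∈ S_{1,1}; (2) G is a transitive tournament; (3) G is an acyclic tournament; (4) G is a tournament containing no directed 3-cycle; (5) G is a tournament in which the vertices have pairwise distinct outdegrees (i.e., the set of outdegrees equals {0,1,…,|V|−1}). -/
/-- In sequence `q`, some entry of type `u` occurs strictly before some entry of type `v`. -/
def SeqBefore {V : Type*} (q : List V) (u v : V) : Prop :=
  ∃ l₁ l₂ l₃ : List V, q = l₁ ++ u :: (l₂ ++ v :: l₃)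

/-- The arc relation of the sequence digraph `g(Q)` of a set `Q` of sequences,
where sequences are recorded as the lists of the types of their items. -/
def GArc {V : Type*} (Q : List (List V)) (u v : V) : Prop :=
  u ≠ v ∧ ∃ q ∈ Q, SeqBefore q u v

/-- The digraph `(V, A)` belongs to the class `S_{k,ℓ}`: up to the relabelling
obtained by taking the types to be the vertices themselves, it is the sequence digraph
of a set of at most `k` sequences containing at most `ℓ` items of each type. -/
def MemS {V : Type*} [DecidableEq V] (A : V → V → Prop) (k ℓ : ℕ) : Prop :=
  ∃ Q : List (List V),
    Q.length ≤ k ∧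
    (∀ v : V, Q.flatten.count v ≤ ℓ) ∧
    (∀ v : V, ∃ q ∈ Q, v ∈ q) ∧
    (∀ u v : V, A u v ↔ GArc Q u v)

/-- `(V, A)` is a tournament: exactly one arc between any two distinct vertices. -/
def IsTournament {V : Type*} (A : V → V → Prop) : Prop :=
  ∀ u v : V, u ≠ v → Xor' (A u v) (A v u)

/-- The digraph `(V, A)` is transitive. -/
def IsTransitiveDigraph {V : Type*} (A : V → V → Prop) : Prop :=
  ∀ u v w : V, A u v → A v w → u ≠ w → A u w

/-- The digraph `(V, A)` is acyclic: it contains no directed cycle. -/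
def IsAcyclicDigraph {V : Type*} (A : V → V → Prop) : Prop :=
  ∀ v : V, ¬ Relation.TransGen A v v

section Helpers

lemma seqBefore_alt' {V : Type*} {q : List V} {u v : V} :
    SeqBefore q u v ↔ ∃ l₁ l₂ : List V, q = l₁ ++ u :: l₂ ∧ v ∈ l₂ := by
  constructor
  · rintro ⟨l₁, l₂, l₃, rfl⟩
    exact ⟨l₁, l₂ ++ v :: l₃, rfl, by simp⟩
  · rintro ⟨l₁, l₂, rfl, hv⟩
    obtain ⟨a, b, rfl⟩ := List.append_of_mem hv
    exact ⟨l₁, a, b, rfl⟩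

lemma split_unique' {V : Type*} {v : V} :
    ∀ (l₁ : List V) (m₁ l₂ m₂ : List V), (l₁ ++ v :: l₂).Nodup →
      l₁ ++ v :: l₂ = m₁ ++ v :: m₂ → l₁ = m₁ ∧ l₂ = m₂ := by
  intro l₁
  induction l₁ with
  | nil =>
    intro m₁ l₂ m₂ hnd h
    cases m₁ with
    | nil => simpa using h
    | cons x m₁ =>
      exfalso
      simp only [List.nil_append, List.cons_append, List.cons.injEq] at h
      obtain ⟨rfl, h2⟩ := h
      have hv : v ∉ l₂ := (List.nodup_cons.mp (by simpa using hnd)).1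
      exact hv (h2 ▸ (by simp : v ∈ m₁ ++ v :: m₂))
  | cons x l₁ ih =>
    intro m₁ l₂ m₂ hnd h
    cases m₁ with
    | nil =>
      exfalso
      simp only [List.cons_append, List.nil_append, List.cons.injEq] at h
      obtain ⟨hx, h2⟩ := h
      subst hx
      have hv : x ∉ l₁ ++ x :: l₂ := (List.nodup_cons.mp (by simp only [List.cons_append] at hnd; exact hnd)).1
      exact hv (by simp)
    | cons y m₁ =>
      simp only [List.cons_append, List.cons.injEq] at h
      obtain ⟨rfl, h2⟩ := h
      obtain ⟨h3, h4⟩ := ih m₁ l₂ m₂ (List.nodup_cons.mp (by simpa using hnd)).2 h2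
      exact ⟨by rw [h3], h4⟩

lemma seqBefore_total' {V : Type*} {q : List V} {u v : V}
    (hu : u ∈ q) (hv : v ∈ q) (hne : u ≠ v) :
    SeqBefore q u v ∨ SeqBefore q v u := by
  obtain ⟨l₁, l₂, rfl⟩ := List.append_of_mem hu
  rcases List.mem_append.mp hv with h | h
  · obtain ⟨a, b, rfl⟩ := List.append_of_mem h
    exact Or.inr (seqBefore_alt'.mpr ⟨a, b ++ u :: l₂, by simp, by simp⟩)
  · rcases List.mem_cons.mp h with h | h
    · exact absurd h.symm hne
    · exact Or.inl (seqBefore_alt'.mpr ⟨l₁, l₂, rfl, h⟩)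

lemma seqBefore_pairwise' {V : Type*} {q : List V} {R : V → V → Prop}
    (hp : q.Pairwise R) {u v : V} (h : SeqBefore q u v) : R u v := by
  obtain ⟨l₁, l₂, l₃, rfl⟩ := h
  have := (List.pairwise_append.mp hp).2.1
  have := (List.pairwise_cons.mp this).1
  exact this v (by simp)

lemma seqBefore_asymm' {V : Type*} {q : List V} (hnd : q.Nodup) {u v : V}
    (h1 : SeqBefore q u v) (h2 : SeqBefore q v u) : False := by
  obtain ⟨l₁, l₂, heq, hv⟩ := seqBefore_alt'.mp h1
  obtain ⟨m₁, m₂, heq', hu⟩ := seqBefore_alt'.mp h2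
  subst heq
  obtain ⟨a, b, rfl⟩ := List.append_of_mem hv
  have hkey := split_unique' (l₁ ++ u :: a) m₁ b m₂ (by simpa using hnd) (by simpa using heq')
  have hunotl2 : u ∉ a ++ v :: b := by
    have : (u :: (a ++ v :: b)).Nodup := (List.nodup_append.mp hnd).2.1
    exact (List.nodup_cons.mp this).1
  exact hunotl2 (by simp [hkey.2 ▸ hu])

lemma seqBefore_trans' {V : Type*} {q : List V} (hnd : q.Nodup) {u v w : V}
    (h1 : SeqBefore q u v) (h2 : SeqBefore q v w) : SeqBefore q u w := by
  obtain ⟨l₁, l₂, heq, hv⟩ := seqBefore_alt'.mp h1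
  obtain ⟨m₁, m₂, heq', hw⟩ := seqBefore_alt'.mp h2
  subst heq
  obtain ⟨a, b, rfl⟩ := List.append_of_mem hv
  have hkey := split_unique' (l₁ ++ u :: a) m₁ b m₂ (by simpa using hnd) (by simpa using heq')
  exact seqBefore_alt'.mpr ⟨l₁, a ++ v :: b, rfl, by simp [hkey.2 ▸ hw]⟩

lemma tourn_inj_trans' {V : Type*} [DecidableEq V] (A : V → V → Prop) [DecidableRel A]
    (hirr : Irreflexive A) (ht : IsTournament A) :
    ∀ s : Finset V,
      (∀ u ∈ s, ∀ v ∈ s, (s.filter (A u ·)).card = (s.filter (A v ·)).card → u = v) →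
      ∀ u ∈ s, ∀ v ∈ s, ∀ w ∈ s, A u v → A v w → u ≠ w → A u w := by
  intro s
  induction s using Finset.strongInduction with
  | _ s ih =>
    intro hinj u hu v hv w hw huv hvw huw
    have hne : s.Nonempty := ⟨u, hu⟩
    set f : V → ℕ := fun x => (s.filter (A x ·)).card with hf
    have hsubf : ∀ x ∈ s, s.filter (A x ·) ⊆ s.erase x := by
      intro x hx y hy
      rw [Finset.mem_filter] at hy
      exact Finset.mem_erase.mpr ⟨fun h => hirr x (h ▸ hy.2), hy.1⟩
    have hflt : ∀ x ∈ s, f x < s.card := by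
      intro x hx
      calc f x ≤ (s.erase x).card := Finset.card_le_card (hsubf x hx)
        _ < s.card := Finset.card_erase_lt_of_mem hx
    have himg : s.image f = Finset.range s.card := by
      apply Finset.eq_of_subset_of_card_le
      · intro n hn
        obtain ⟨x, hx, rfl⟩ := Finset.mem_image.mp hn
        exact Finset.mem_range.mpr (hflt x hx)
      · rw [Finset.card_range, Finset.card_image_of_injOn (fun a ha b hb hab => hinj a ha b hb hab)]
    have hm : ∃ m ∈ s, f m = s.card - 1 := by
      have : s.card - 1 ∈ Finset.range s.card :=
        Finset.mem_range.mpr (Nat.sub_lt (Finset.card_pos.mpr hne) one_pos)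
      rw [← himg] at this
      simpa using Finset.mem_image.mp this
    obtain ⟨m, hms, hfm⟩ := hm
    have hbeats : ∀ x ∈ s, x ≠ m → A m x := by
      have heq : s.filter (A m ·) = s.erase m := by
        apply Finset.eq_of_subset_of_card_le (hsubf m hms)
        rw [Finset.card_erase_of_mem hms, ← hfm]
      intro x hx hxm
      have : x ∈ s.filter (A m ·) := heq ▸ Finset.mem_erase.mpr ⟨hxm, hx⟩
      exact (Finset.mem_filter.mp this).2
    by_cases hum : u = m
    · exact hum ▸ hbeats w hw (fun h => huw (hum ▸ h ▸ rfl))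
    by_cases hvm : v = m
    · subst hvm
      exact absurd huv (((ht u v hum).resolve_left
        (fun h => h.2 (hbeats u hu hum))).2)
    by_cases hwm : w = m
    · subst hwm
      exact absurd hvw (((ht v w hvm).resolve_left
        (fun h => h.2 (hbeats v hv hvm))).2)
    have hss : s.erase m ⊂ s := Finset.erase_ssubset hms
    have hfeq : ∀ x ∈ s.erase m, (s.erase m).filter (A x ·) = s.filter (A x ·) := by
      intro x hx
      rw [Finset.filter_erase]
      apply Finset.erase_eq_of_notMem
      intro hmem
      have hAxm : A x m := (Finset.mem_filter.mp hmem).2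
      have hxm := (Finset.mem_erase.mp hx).1
      exact ((ht m x (fun h => hxm h.symm)).resolve_right (fun h => h.2
        (hbeats x (Finset.mem_erase.mp hx).2 hxm))).2 hAxm
    exact ih (s.erase m) hss
      (fun a ha b hb hab => hinj a (Finset.mem_of_mem_erase ha) b (Finset.mem_of_mem_erase hb)
        (by rw [← hfeq a ha, ← hfeq b hb]; exact hab))
      u (Finset.mem_erase.mpr ⟨hum, hu⟩) v (Finset.mem_erase.mpr ⟨hvm, hv⟩)
      w (Finset.mem_erase.mpr ⟨hwm, hw⟩) huv hvw huw

end Helpers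

/-- For every loopless digraph `G = (V, A)` the following are equivalent:
(1) `G ∈ S_{1,1}`; (2) `G` is a transitive tournament; (3) `G` is an acyclic tournament;
(4) `G` is a tournament containing no directed 3-cycle; (5) `G` is a tournament in which
the vertices have pairwise distinct outdegrees. -/
theorem stmt0 {V : Type*} [Fintype V] [DecidableEq V]
    (A : V → V → Prop) (hloopless : Irreflexive A) :
    List.TFAE
      [ MemS A 1 1,
        IsTournament A ∧ IsTransitiveDigraph A,
        IsTournament A ∧ IsAcyclicDigraph A,
        IsTournament A ∧
          ¬ ∃ x y z : V, x ≠ y ∧ y ≠ z ∧ x ≠ z ∧ A x y ∧ A y z ∧ A z x,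
        IsTournament A ∧
          ∀ u v : V, {w : V | A u w}.ncard = {w : V | A v w}.ncard → u = v ] := by
  tfae_have 1 → 2 := by
    rintro ⟨Q, hlen, hcount, hcover, hiff⟩
    match Q, hlen with
    | [], _ =>
      constructor
      · intro u v _
        exact absurd (hcover u) (by simp)
      · intro u v w _ _ _
        exact absurd (hcover u) (by simp)
    | [q], _ =>
      have hnd : q.Nodup := List.nodup_iff_count_le_one.mpr (fun v => by
        have := hcount v; simpa using this)
      have hmemq : ∀ v : V, v ∈ q := by
        intro v
        obtain ⟨q', hq', hv⟩ := hcover v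
        rwa [List.mem_singleton.mp hq'] at hv
      have hA : ∀ u v : V, A u v ↔ u ≠ v ∧ SeqBefore q u v := by
        intro u v
        rw [hiff]
        unfold GArc
        simp
      constructor
      · intro u v hne
        rcases seqBefore_total' (hmemq u) (hmemq v) hne with h | h
        · exact Or.inl ⟨(hA u v).mpr ⟨hne, h⟩,
            fun hvu => seqBefore_asymm' hnd h ((hA v u).mp hvu).2⟩
        · exact Or.inr ⟨(hA v u).mpr ⟨hne.symm, h⟩,
            fun huv => seqBefore_asymm' hnd h ((hA u v).mp huv).2⟩
      · intro u v w huv hvw huw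
        exact (hA u w).mpr ⟨huw,
          seqBefore_trans' hnd ((hA u v).mp huv).2 ((hA v w).mp hvw).2⟩
    | _ :: _ :: _, hlen => exact absurd hlen (by simp)
  tfae_have 2 → 1 := by
    rintro ⟨ht, htr⟩
    set r : V → V → Prop := fun x y => ¬ A y x with hr
    haveI : DecidableRel r := Classical.decRel r
    haveI : IsTotal V r := ⟨by
      intro x y
      by_cases h : x = y
      · exact Or.inl (h ▸ fun ha => hloopless x ha)
      · rcases ht x y h with ⟨_, hn⟩ | ⟨_, hn⟩
        · exact Or.inl hn
        · exact Or.inr hn⟩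
    haveI : IsTrans V r := ⟨by
      intro x y z hxy hyz hzx
      by_cases hxz : x = z
      · exact hloopless x (hxz ▸ hzx)
      by_cases hyz' : y = z
      · exact hxy (hyz' ▸ hzx)
      by_cases hxy' : x = y
      · exact hyz (hxy' ▸ hzx)
      have hAxy : A x y := ((ht x y hxy').resolve_right (fun h => hxy h.1)).1
      have hAyz : A y z := ((ht y z hyz').resolve_right (fun h => hyz h.1)).1
      have hAxz : A x z := htr x y z hAxy hAyz hxz
      exact ((ht x z hxz).resolve_right (fun h => h.2 hAxz)).2 hzx⟩
    haveI : IsAntisymm V r := ⟨by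
      intro x y hxy hyx
      by_contra h
      rcases ht x y h with ⟨ha, _⟩ | ⟨ha, _⟩
      · exact hyx ha
      · exact hxy ha⟩
    set q : List V := Finset.univ.sort r with hq
    have hnd : q.Nodup := Finset.sort_nodup Finset.univ r
    have hmemq : ∀ v : V, v ∈ q := fun v => (Finset.mem_sort r).mpr (Finset.mem_univ v)
    have hsorted : q.Pairwise r := Finset.pairwise_sort Finset.univ r
    refine ⟨[q], le_refl 1, ?_, fun v => ⟨q, by simp, hmemq v⟩, ?_⟩
    · intro v
      simpa using List.nodup_iff_count_le_one.mp hnd v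
    · intro u v
      constructor
      · intro huv
        have hne : u ≠ v := fun h => hloopless u (h ▸ huv)
        refine ⟨hne, q, by simp, ?_⟩
        rcases seqBefore_total' (hmemq u) (hmemq v) hne with h | h
        · exact h
        · exact absurd huv (seqBefore_pairwise' hsorted h)
      · rintro ⟨hne, q', hq', hsb⟩
        rw [List.mem_singleton.mp hq'] at hsb
        have hnav : ¬ A v u := seqBefore_pairwise' hsorted hsb
        exact ((ht u v hne).resolve_right (fun h => hnav h.1)).1
  tfae_have 2 → 3 := by
    rintro ⟨ht, htr⟩
    refine ⟨ht, ?_⟩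
    intro v hcyc
    have key : ∀ a b : V, Relation.TransGen A a b → a ≠ b → A a b := by
      intro a b h
      induction h with
      | single h => exact fun _ => h
      | tail h hbc ih =>
        intro hac
        rename_i b' c'
        by_cases hab : a = b'
        · exact hab ▸ hbc
        · exact htr a b' c' (ih hab) hbc hac
    cases hcyc with
    | single h => exact hloopless v h
    | tail h hlast =>
      rename_i b
      have hbv : b ≠ v := fun heq => hloopless v (heq ▸ hlast)
      have hvb : A v b := key v b h (Ne.symm hbv)
      exact ((ht v b (Ne.symm hbv)).resolve_right (fun h' => h'.2 hvb)).2 hlast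
  tfae_have 3 → 4 := by
    rintro ⟨ht, hac⟩
    refine ⟨ht, ?_⟩
    rintro ⟨x, y, z, _, _, _, hxy, hyz, hzx⟩
    exact hac x (Relation.TransGen.tail
      (Relation.TransGen.tail (Relation.TransGen.single hxy) hyz) hzx)
  tfae_have 4 → 2 := by
    rintro ⟨ht, h3⟩
    refine ⟨ht, ?_⟩
    intro u v w huv hvw huw
    by_contra hnuw
    have hwu : A w u := ((ht u w huw).resolve_left (fun h => hnuw h.1)).1
    exact h3 ⟨u, v, w, fun h => hloopless u (h ▸ huv), fun h => hloopless v (h ▸ hvw),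
      huw, huv, hvw, hwu⟩
  tfae_have 2 → 5 := by
    rintro ⟨ht, htr⟩
    refine ⟨ht, ?_⟩
    have key : ∀ a b : V, A a b → {w : V | A b w}.ncard < {w : V | A a w}.ncard := by
      intro a b hab
      apply Set.ncard_lt_ncard _ (Set.toFinite _)
      constructor
      · intro w hw
        have hwa : w ≠ a := by
          rintro rfl
          exact ((ht w b (fun h => hloopless w (h ▸ hab))).resolve_right
            (fun h => h.2 hab)).2 hw
        exact htr a b w hab hw (Ne.symm hwa)
      · intro hsub
        exact hloopless b (hsub hab)
    intro u v h
    by_contra hne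
    rcases ht u v hne with ⟨ha, _⟩ | ⟨ha, _⟩
    · exact absurd h.symm (ne_of_lt (key u v ha))
    · exact absurd h (ne_of_lt (key v u ha))
  tfae_have 5 → 2 := by
    rintro ⟨ht, hinj⟩
    refine ⟨ht, ?_⟩
    letI : DecidableRel A := Classical.decRel A
    have hcard : ∀ u : V, {w : V | A u w}.ncard = (Finset.univ.filter (A u ·)).card := by
      intro u
      rw [← Set.ncard_coe_finset]
      congr 1
      ext w
      simp
    intro u v w huv hvw huw
    exact tourn_inj_trans' A hloopless ht Finset.univ
      (fun a _ b _ hab => hinj a b (by rw [hcard a, hcard b]; exact hab))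
      u (Finset.mem_univ u) v (Finset.mem_univ v) w (Finset.mem_univ w) huv hvw huw
  tfae_finish
end

section
/- For every two integers ℓ, ℓ' ≥ 2 the classes S_{1,ℓ} and S_{1,ℓ'} coincide: a digraph is isomorphic to the sequence digraph of a single sequence with at most ℓ items per type if and only if it is isomorphic to the sequence digraph of a single sequence with at most ℓ' items per type. -/
namespace Stmt3Aux
variable {V : Type*} [DecidableEq V]

def trim (seen : List V) : List V → List V
  | [] => []
  | a :: rest => if a ∈ seen ∧ a ∈ rest then trim seen rest else a :: trim (a :: seen) rest

lemma trim_sublist (seen q : List V) : (trim seen q).Sublist q := by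
  induction q generalizing seen with
  | nil => simp [trim]
  | cons a rest ih =>
    rw [trim]
    by_cases hb : a ∈ seen ∧ a ∈ rest
    · rw [if_pos hb]; exact (ih seen).trans (List.sublist_cons_self a rest)
    · rw [if_neg hb]; exact (ih (a :: seen)).cons₂ a

lemma mem_trim {a : V} {q : List V} (seen : List V) (h : a ∈ q) : a ∈ trim seen q := by
  induction q generalizing seen with
  | nil => simp at h
  | cons b rest ih =>
    rw [trim]
    by_cases hb : b ∈ seen ∧ b ∈ rest
    · rw [if_pos hb]
      rcases List.mem_cons.mp h with rfl | h'
      · exact ih seen hb.2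
      · exact ih seen h'
    · rw [if_neg hb]
      rcases List.mem_cons.mp h with rfl | h'
      · exact List.mem_cons_self
      · exact List.mem_cons_of_mem _ (ih (b :: seen) h')

lemma count_trim (a : V) (seen q : List V) :
    (trim seen q).count a ≤ if a ∈ seen then 1 else 2 := by
  induction q generalizing seen with
  | nil => simp only [trim, List.count_nil]; split <;> norm_num
  | cons b rest ih =>
    rw [trim]
    by_cases hb : b ∈ seen ∧ b ∈ rest
    · rw [if_pos hb]; exact ih seen
    · rw [if_neg hb, List.count_cons]
      by_cases hab : a = b
      · subst hab
        simp only [beq_self_eq_true, if_pos]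
        have h1 : (trim (a :: seen) rest).count a ≤ 1 := by
          have := ih (a :: seen)
          simpa using this
        by_cases has : a ∈ seen
        · rw [if_pos has]
          have hnr : a ∉ rest := fun hr => hb ⟨has, hr⟩
          have h0 : (trim (a :: seen) rest).count a = 0 := by
            rw [List.count_eq_zero]
            exact fun hm => hnr ((trim_sublist (a :: seen) rest).mem hm)
          omega
        · rw [if_neg has]; omega
      · have hba : (b == a) = false := by
          simp only [beq_eq_false_iff_ne]; exact fun h => hab h.symm
        rw [hba]
        have := ih (b :: seen)
        simp only [List.mem_cons, hab, false_or] at this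
        simp only [Bool.false_eq_true, if_false, add_zero]
        omega

lemma seqBefore_iff_sublist {q : List V} {u v : V} :
    SeqBefore q u v ↔ ([u, v]).Sublist q := by
  rw [List.cons_sublist_iff]
  constructor
  · rintro ⟨l₁, l₂, l₃, rfl⟩
    exact ⟨l₁ ++ [u], l₂ ++ v :: l₃, by simp, by simp, by simp⟩
  · rintro ⟨r₁, r₂, rfl, hu, hv⟩
    rw [List.singleton_sublist] at hv
    obtain ⟨s₁, s₂, rfl⟩ := List.append_of_mem hu
    obtain ⟨t₁, t₂, rfl⟩ := List.append_of_mem hv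
    exact ⟨s₁, s₂ ++ t₁, t₂, by simp⟩

lemma seqBefore_split {q : List V} {u v : V} :
    SeqBefore q u v ↔ ∃ s t : List V, q = s ++ t ∧ u ∈ s ∧ v ∈ t := by
  rw [seqBefore_iff_sublist, List.cons_sublist_iff]
  simp [List.singleton_sublist]

lemma seqBefore_cons {q : List V} {a u v : V} (h : SeqBefore q u v) :
    SeqBefore (a :: q) u v := by
  obtain ⟨l₁, l₂, l₃, rfl⟩ := h
  exact ⟨a :: l₁, l₂, l₃, rfl⟩

lemma trim_before {u v : V} (seen s t : List V) (hu : u ∈ s) (hv : v ∈ t)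
    (hus : u ∉ seen) : SeqBefore (trim seen (s ++ t)) u v := by
  induction s generalizing seen with
  | nil => simp at hu
  | cons a s' ih =>
    rw [List.cons_append, trim]
    by_cases hb : a ∈ seen ∧ a ∈ s' ++ t
    · rw [if_pos hb]
      have hau : a ≠ u := fun h => hus (h ▸ hb.1)
      have hu' : u ∈ s' := by
        rcases List.mem_cons.mp hu with h | h
        · exact absurd h.symm hau
        · exact h
      exact ih seen hu' hus
    · rw [if_neg hb]
      by_cases hau : a = u
      · subst hau
        refine ⟨[], ?_⟩
        have hvm : v ∈ trim (a :: seen) (s' ++ t) :=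
          mem_trim _ (List.mem_append_right s' hv)
        obtain ⟨t₁, t₂, hsplit⟩ := List.append_of_mem hvm
        exact ⟨t₁, t₂, by rw [hsplit]; rfl⟩
      · have hu' : u ∈ s' := by
          rcases List.mem_cons.mp hu with h | h
          · exact absurd h.symm hau
          · exact h
        have hus' : u ∉ a :: seen := by
          intro h
          rcases List.mem_cons.mp h with h' | h'
          · exact hau h'.symm
          · exact hus h'
        exact seqBefore_cons (ih (a :: seen) hu' hus')

lemma trim_seqBefore_iff {q : List V} {u v : V} :
    SeqBefore (trim [] q) u v ↔ SeqBefore q u v := by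
  constructor
  · intro h
    rw [seqBefore_iff_sublist] at h ⊢
    exact h.trans (trim_sublist [] q)
  · intro h
    obtain ⟨s, t, rfl, hu, hv⟩ := seqBefore_split.mp h
    exact trim_before [] s t hu hv (by simp)

end Stmt3Aux

lemma memS_one_mono {V : Type*} [DecidableEq V] {A : V → V → Prop} {m n : ℕ}
    (hmn : m ≤ n) (h : MemS A 1 m) : MemS A 1 n := by
  obtain ⟨Q, h1, h2, h3, h4⟩ := h
  exact ⟨Q, h1, fun v => (h2 v).trans hmn, h3, h4⟩

lemma memS_to_two {V : Type*} [DecidableEq V] {A : V → V → Prop} {m : ℕ}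
    (h : MemS A 1 m) : MemS A 1 2 := by
  obtain ⟨Q, h1, h2, h3, h4⟩ := h
  cases Q with
  | nil => exact ⟨[], by simp, by simp, h3, h4⟩
  | cons q Q' =>
    have hQ' : Q' = [] := by
      rw [List.length_cons] at h1
      exact List.eq_nil_of_length_eq_zero (by omega)
    subst hQ'
    refine ⟨[Stmt3Aux.trim [] q], by simp, ?_, ?_, ?_⟩
    · intro v
      have := Stmt3Aux.count_trim v ([] : List V) q
      simpa using this
    · intro v
      obtain ⟨q', hq', hv⟩ := h3 v
      rw [List.mem_singleton] at hq'
      rw [hq'] at hv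
      exact ⟨Stmt3Aux.trim [] q, List.mem_singleton_self _, Stmt3Aux.mem_trim [] hv⟩
    · intro u v
      rw [h4 u v]
      unfold GArc
      simp only [List.mem_singleton, exists_eq_left, Stmt3Aux.trim_seqBefore_iff]

/-- For all `ℓ, ℓ' ≥ 2` the classes `S_{1,ℓ}` and `S_{1,ℓ'}` coincide. -/
theorem stmt3 {V : Type*} [Fintype V] [DecidableEq V]
    (A : V → V → Prop) (hloopless : Irreflexive A)
    (ℓ ℓ' : ℕ) (hℓ : 2 ≤ ℓ) (hℓ' : 2 ≤ ℓ') :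
    MemS A 1 ℓ ↔ MemS A 1 ℓ' :=
  ⟨fun h => memS_one_mono hℓ' (memS_to_two h),
   fun h => memS_one_mono hℓ (memS_to_two h)⟩
end

section
/- Let ℓ ≥ 1 and let G ∈ S_{1,ℓ}, i.e., G is the sequence digraph of a single sequence. Then the complement digraph co(G) is transitive: if (u,v) and (v,w) are arcs of co(G) with u ≠ w, then (u,w) is an arc of co(G). -/
/-- The arc relation of the complement digraph of the loopless digraph `(V, A)`. -/
def CoArc {V : Type*} (A : V → V → Prop) (u v : V) : Prop :=
  u ≠ v ∧ ¬ A u v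

lemma seqBefore_iff_split {V : Type*} (q : List V) (u v : V) :
    SeqBefore q u v ↔ ∃ s t : List V, q = s ++ t ∧ u ∈ s ∧ v ∈ t := by
  constructor
  · rintro ⟨l₁, l₂, l₃, rfl⟩
    exact ⟨l₁ ++ [u], l₂ ++ v :: l₃, by simp, by simp, by simp⟩
  · rintro ⟨s, t, rfl, hu, hv⟩
    obtain ⟨a, b, rfl⟩ := List.append_of_mem hu
    obtain ⟨c, d, rfl⟩ := List.append_of_mem hv
    exact ⟨a, b ++ c, d, by simp⟩

/-- If `ℓ ≥ 1` and `G = (V, A) ∈ S_{1,ℓ}`, then the complement digraph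
`co(G)` is transitive. -/
theorem stmt4 {V : Type*} [Fintype V] [DecidableEq V]
    (A : V → V → Prop) (hloopless : Irreflexive A)
    (ℓ : ℕ) (hℓ : 1 ≤ ℓ) (h : MemS A 1 ℓ) :
    ∀ u v w : V, CoArc A u v → CoArc A v w → u ≠ w → CoArc A u w := by
  obtain ⟨Q, hlen, -, hcov, hiff⟩ := h
  rintro u v w ⟨huv, hAuv⟩ ⟨hvw, hAvw⟩ huw
  refine ⟨huw, fun hA => ?_⟩
  rw [hiff] at hA
  obtain ⟨-, q, hqQ, hbef⟩ := hA
  -- Q has at most one element, so the sequence containing v is q itself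
  obtain ⟨q', hq'Q, hvq'⟩ := hcov v
  have hq : q' = q := by
    match Q, hlen with
    | [], _ => cases hqQ
    | [x], _ =>
      simp only [List.mem_singleton] at hqQ hq'Q; rw [hqQ, hq'Q]
  subst hq
  rw [seqBefore_iff_split] at hbef
  obtain ⟨s, t, hst, hus, hwt⟩ := hbef
  rcases List.mem_append.mp (hst ▸ hvq' : v ∈ s ++ t) with hv | hv
  · exact hAvw ((hiff v w).mpr ⟨hvw, q', hq'Q, (seqBefore_iff_split _ _ _).mpr ⟨s, t, hst, hv, hwt⟩⟩)
  · exact hAuv ((hiff u v).mpr ⟨huv, q', hq'Q, (seqBefore_iff_split _ _ _).mpr ⟨s, t, hst, hus, hv⟩⟩)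
end

section
/- Let ℓ ≥ 1 and let G ∈ S_{1,ℓ}, i.e., G is the sequence digraph of a single sequence. Then the complement digraph co(G) contains no induced subdigraph isomorphic to 2P2, the digraph on four vertices {a,b,c,d} whose only arcs are (c,a) and (d,b). -/
lemma split_of_getElem? {V : Type*} {q : List V} {j : ℕ} {v : V}
    (h : q[j]? = some v) : ∃ l l' : List V, q = l ++ v :: l' ∧ l.length = j := by
  have hj : j < q.length := by
    by_contra hc
    rw [List.getElem?_eq_none (le_of_not_gt hc)] at h
    exact Option.noConfusion rfl (heq_of_eq h)
  have hv : q[j] = v := by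
    rw [List.getElem?_eq_getElem hj] at h
    exact Option.some.inj h
  refine ⟨q.take j, q.drop (j+1), ?_, List.length_take_of_le (le_of_lt hj)⟩
  conv_lhs => rw [← List.take_append_drop j q]
  rw [← hv, List.getElem_cons_drop]

lemma seqBefore_of_getElem? {V : Type*} {q : List V} {i j : ℕ} {u v : V}
    (hij : i < j) (hu : q[i]? = some u) (hv : q[j]? = some v) : SeqBefore q u v := by
  obtain ⟨l₁, r, hq, hl⟩ := split_of_getElem? hu
  have hvr : r[j - (i+1)]? = some v := by
    have : q[j]? = (l₁ ++ u :: r)[j]? := by rw [hq]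
    rw [List.getElem?_append_right (by omega : l₁.length ≤ j)] at this
    rw [hl] at this
    have hji : j - i = (j - (i+1)) + 1 := by omega
    rw [hji, List.getElem?_cons_succ] at this
    exact this.symm.trans hv
  obtain ⟨l₂, l₃, hr, _⟩ := split_of_getElem? hvr
  exact ⟨l₁, l₂, l₃, by rw [hq, hr]⟩

lemma getElem?_of_seqBefore {V : Type*} {q : List V} {u v : V}
    (h : SeqBefore q u v) : ∃ i j : ℕ, i < j ∧ q[i]? = some u ∧ q[j]? = some v := by
  obtain ⟨l₁, l₂, l₃, hq⟩ := h
  refine ⟨l₁.length, l₁.length + l₂.length + 1, by omega, ?_, ?_⟩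
  · rw [hq, List.getElem?_append_right (le_refl _)]
    simp
  · rw [hq, List.getElem?_append_right (by omega : l₁.length ≤ _)]
    have : l₁.length + l₂.length + 1 - l₁.length = l₂.length + 1 := by omega
    rw [this]
    rw [List.getElem?_cons_succ, List.getElem?_append_right (le_refl l₂.length)]
    simp

/-- If `ℓ ≥ 1` and `G = (V, A) ∈ S_{1,ℓ}`, then the complement digraph
`co(G)` contains no induced subdigraph isomorphic to `2P2`, the digraph on four vertices
`a, b, c, d` whose only arcs are `(c,a)` and `(d,b)`. -/
theorem stmt5 {V : Type*} [Fintype V] [DecidableEq V]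
    (A : V → V → Prop) (hloopless : Irreflexive A)
    (ℓ : ℕ) (hℓ : 1 ≤ ℓ) (h : MemS A 1 ℓ) :
    ¬ ∃ a b c d : V, a ≠ b ∧ a ≠ c ∧ a ≠ d ∧ b ≠ c ∧ b ≠ d ∧ c ≠ d ∧
        CoArc A c a ∧ CoArc A d b ∧
        ¬ CoArc A a b ∧ ¬ CoArc A b a ∧ ¬ CoArc A a c ∧ ¬ CoArc A a d ∧
        ¬ CoArc A d a ∧ ¬ CoArc A b c ∧ ¬ CoArc A c b ∧ ¬ CoArc A b d ∧
        ¬ CoArc A c d ∧ ¬ CoArc A d c := by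
  rintro ⟨a, b, c, d, hab, hac, had, hbc, hbd, hcd, ⟨_, hnca⟩, ⟨_, hndb⟩,
    _, _, _, _, hda, _, hcb, _, _, _⟩
  obtain ⟨Q, hlen, -, hcover, hiff⟩ := h
  -- Q is a singleton [q]
  obtain ⟨q, hqQ, -⟩ := hcover a
  have hQ : Q = [q] := by
    match Q, hlen, hqQ with
    | [q'], _, hq => simp_all
  subst hQ
  have hA : ∀ u v : V, A u v ↔ u ≠ v ∧ SeqBefore q u v := by
    intro u v
    rw [hiff]
    unfold GArc
    simp
  -- arcs present
  have hAcb : SeqBefore q c b := ((hA c b).mp (by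
    by_contra hn; exact hcb ⟨hbc.symm, hn⟩)).2
  have hAda : SeqBefore q d a := ((hA d a).mp (by
    by_contra hn; exact hda ⟨fun e => had e.symm, hn⟩)).2
  -- arcs absent
  have hnSca : ¬ SeqBefore q c a := fun hs => hnca ((hA c a).mpr ⟨fun e => hac e.symm, hs⟩)
  have hnSdb : ¬ SeqBefore q d b := fun hs => hndb ((hA d b).mpr ⟨fun e => hbd e.symm, hs⟩)
  obtain ⟨i₁, j₁, hij₁, hc', hb'⟩ := getElem?_of_seqBefore hAcb
  obtain ⟨p, j₀, hpj, hd', ha'⟩ := getElem?_of_seqBefore hAda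
  rcases lt_or_ge i₁ j₀ with hlt | hle
  · exact hnSca (seqBefore_of_getElem? hlt hc' ha')
  · exact hnSdb (seqBefore_of_getElem? (by omega) hd' hb')
end

section
/- Let ℓ ≥ 1 and let G ∈ S_{1,ℓ}, i.e., G is the sequence digraph of a single sequence. Then the complement digraph co(G) is acyclic, i.e., it contains no directed cycle (in particular no pair of opposite arcs). -/
lemma seqBefore_of_lt {V : Type*} (q : List V) (u v : V) (i j : ℕ) (hij : i < j)
    (hj : j < q.length) (hu : q[i]'(lt_trans hij hj) = u) (hv : q[j] = v) :
    SeqBefore q u v := by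
  have hi : i < q.length := lt_trans hij hj
  have hdrop : q.drop i = u :: q.drop (i+1) := by
    rw [← hu]
    exact (List.getElem_cons_drop hi).symm
  have hlen : j - (i+1) < (q.drop (i+1)).length := by
    simp [List.length_drop]; omega
  have hvmem : v ∈ q.drop (i+1) := by
    have h2 : (q.drop (i+1))[j-(i+1)]'hlen = q[j] := by
      rw [List.getElem_drop]
      congr 1
      omega
    exact (h2.trans hv) ▸ List.getElem_mem _
  obtain ⟨l₂, l₃, h23⟩ := List.append_of_mem hvmem
  refine ⟨q.take i, l₂, l₃, ?_⟩
  conv_lhs => rw [← List.take_append_drop i q]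
  rw [hdrop, h23]

/-- If `ℓ ≥ 1` and `G = (V, A) ∈ S_{1,ℓ}`, then the complement digraph
`co(G)` is acyclic: it contains no directed cycle. -/
theorem stmt6 {V : Type*} [Fintype V] [DecidableEq V]
    (A : V → V → Prop) (hloopless : Irreflexive A)
    (ℓ : ℕ) (hℓ : 1 ≤ ℓ) (h : MemS A 1 ℓ) :
    ∀ v : V, ¬ Relation.TransGen (CoArc A) v v := by
  intro v hcyc
  obtain ⟨Q, hlen, -, hall, hiff⟩ := h
  obtain ⟨q₀, hq₀Q, hvq₀⟩ := hall v
  have hQ : Q = [q₀] := by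
    match Q, hlen, hq₀Q with
    | [a], _, hm => simp at hm; rw [hm]
  have hmem : ∀ u : V, u ∈ q₀ := by
    intro u
    obtain ⟨q', hq', h'⟩ := hall u
    rw [hQ] at hq'
    simp at hq'
    rwa [← hq']
  have key : ∀ u w : V, CoArc A u w → q₀.idxOf w < q₀.idxOf u := by
    rintro u w ⟨hne, hnA⟩
    by_contra h'
    push_neg at h'
    have hne' : q₀.idxOf u ≠ q₀.idxOf w :=
      fun he => hne ((List.idxOf_inj (hmem u)).mp he)
    have hlt : q₀.idxOf u < q₀.idxOf w := lt_of_le_of_ne h' hne'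
    have hwlen : q₀.idxOf w < q₀.length := List.idxOf_lt_length_iff.mpr (hmem w)
    have : SeqBefore q₀ u w :=
      seqBefore_of_lt q₀ u w _ _ hlt hwlen (List.getElem_idxOf _) (List.getElem_idxOf _)
    exact hnA ((hiff u w).mpr ⟨hne, q₀, by simp [hQ], this⟩)
  have mono : ∀ a b : V, Relation.TransGen (CoArc A) a b → q₀.idxOf b < q₀.idxOf a := by
    intro a b hab
    induction hab with
    | single h1 => exact key _ _ h1
    | tail _ h1 ih => exact lt_trans (key _ _ h1) ih
  exact lt_irrefl _ (mono v v hcyc)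
end

section
/- Every semicomplete loopless digraph G on n ≥ 1 vertices that contains no induced subdigraph isomorphic to the directed 3-cycle C3 or to D4 has a vertex of outdegree n−1 and a vertex of indegree n−1. -/
/-- `(V, A)` is semicomplete: at least one arc between any two distinct vertices. -/
def IsSemicomplete {V : Type*} (A : V → V → Prop) : Prop :=
  ∀ u v : V, u ≠ v → A u v ∨ A v u

/-- `(V, A)` has an induced subdigraph isomorphic to the directed 3-cycle `C3`. -/
def HasInducedC3 {V : Type*} (A : V → V → Prop) : Prop :=
  ∃ x y z : V, x ≠ y ∧ y ≠ z ∧ x ≠ z ∧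
    A x y ∧ A y z ∧ A z x ∧ ¬ A y x ∧ ¬ A z y ∧ ¬ A x z

/-- `(V, A)` has an induced subdigraph isomorphic to `D4`: a directed 3-cycle
`x → y → z → x` together with the single additional arc `(y, x)`. -/
def HasInducedD4 {V : Type*} (A : V → V → Prop) : Prop :=
  ∃ x y z : V, x ≠ y ∧ y ≠ z ∧ x ≠ z ∧
    A x y ∧ A y z ∧ A z x ∧ A y x ∧ ¬ A z y ∧ ¬ A x z

/-- Every semicomplete loopless digraph on `n ≥ 1` vertices without an
induced `C3` and without an induced `D4` has a vertex of outdegree `n - 1` and a vertex of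
indegree `n - 1`. -/
theorem stmt7 {V : Type*} [Fintype V] [Nonempty V]
    (A : V → V → Prop) (hloopless : Irreflexive A)
    (hsemi : IsSemicomplete A)
    (hC3 : ¬ HasInducedC3 A) (hD4 : ¬ HasInducedD4 A) :
    (∃ v : V, {w : V | A v w}.ncard = Fintype.card V - 1) ∧
    (∃ v : V, {w : V | A w v}.ncard = Fintype.card V - 1) := by
  classical
  -- strict domination relation
  set B : V → V → Prop := fun u v => A u v ∧ ¬ A v u with hB
  have hBirrefl : ∀ x, ¬ B x x := fun x h => h.2 h.1
  have hBtrans : ∀ x y z, B x y → B y z → B x z := by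
    intro x y z hxy hyz
    have hxz_ne : x ≠ z := by
      rintro rfl
      exact hxy.2 hyz.1
    have hxy_ne : x ≠ y := by rintro rfl; exact hxy.2 hxy.1
    have hyz_ne : y ≠ z := by rintro rfl; exact hyz.2 hyz.1
    have hnAzx : ¬ A z x := by
      intro hzx
      by_cases hxz : A x z
      · exact hD4 ⟨z, x, y, (Ne.symm hxz_ne), hxy_ne, (Ne.symm hyz_ne),
          hzx, hxy.1, hyz.1, hxz, hxy.2, hyz.2⟩
      · exact hC3 ⟨x, y, z, hxy_ne, hyz_ne, hxz_ne,
          hxy.1, hyz.1, hzx, hxy.2, hyz.2, hxz⟩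
    have hAxz : A x z := (hsemi x z hxz_ne).resolve_right hnAzx
    exact ⟨hAxz, hnAzx⟩
  haveI : IsTrans V B := ⟨hBtrans⟩
  haveI : IsIrrefl V B := ⟨hBirrefl⟩
  have hwfB : WellFounded B := Finite.wellFounded_of_trans_of_irrefl B
  haveI : IsTrans V (flip B) := ⟨fun a b c h1 h2 => hBtrans c b a h2 h1⟩
  haveI : IsIrrefl V (flip B) := ⟨hBirrefl⟩
  have hwfB' : WellFounded (flip B) := Finite.wellFounded_of_trans_of_irrefl (flip B)
  have hcompl : ∀ v : V, ({v}ᶜ : Set V).ncard = Fintype.card V - 1 := by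
    intro v
    rw [show ({v}ᶜ : Set V) = ↑(({v} : Finset V)ᶜ) by simp, Set.ncard_coe_finset,
      Finset.card_compl, Finset.card_singleton]
  constructor
  · obtain ⟨m, -, hm⟩ := hwfB.has_min Set.univ ⟨Classical.arbitrary V, trivial⟩
    refine ⟨m, ?_⟩
    have : {w : V | A m w} = ({m}ᶜ : Set V) := by
      ext w
      simp only [Set.mem_setOf_eq, Set.mem_compl_iff, Set.mem_singleton_iff]
      constructor
      · intro h rfl'; exact hloopless m (rfl' ▸ h)
      · intro hne
        by_contra hnm
        have hwm : A w m := (hsemi m w (Ne.symm hne)).resolve_left hnm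
        exact hm w trivial ⟨hwm, hnm⟩
    rw [this]; exact hcompl m
  · obtain ⟨m, -, hm⟩ := hwfB'.has_min Set.univ ⟨Classical.arbitrary V, trivial⟩
    refine ⟨m, ?_⟩
    have : {w : V | A w m} = ({m}ᶜ : Set V) := by
      ext w
      simp only [Set.mem_setOf_eq, Set.mem_compl_iff, Set.mem_singleton_iff]
      constructor
      · intro h rfl'; exact hloopless m (rfl' ▸ h)
      · intro hne
        by_contra hnm
        have hmw : A m w := (hsemi m w (Ne.symm hne)).resolve_right hnm
        exact hm w trivial ⟨hmw, hnm⟩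
    rw [this]; exact hcompl m
end

section
/- Let G be a semicomplete loopless digraph containing no induced subdigraph isomorphic to the directed 3-cycle C3 or to D4. Then the complement digraph co(G) is transitive: if (u,v) and (v,w) are arcs of co(G) with u ≠ w, then (u,w) is an arc of co(G). -/
/-- For every semicomplete loopless digraph without an induced `C3` and
without an induced `D4`, the complement digraph is transitive. -/
theorem stmt8 {V : Type*} [Fintype V]
    (A : V → V → Prop) (hloopless : Irreflexive A)
    (hsemi : IsSemicomplete A)
    (hC3 : ¬ HasInducedC3 A) (hD4 : ¬ HasInducedD4 A) :
    ∀ u v w : V, CoArc A u v → CoArc A v w → u ≠ w → CoArc A u w := by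
  rintro u v w ⟨huv, hAuv⟩ ⟨hvw, hAvw⟩ huw
  refine ⟨huw, fun hAuw => ?_⟩
  have hvu : A v u := (hsemi u v huv).resolve_left hAuv
  have hwv : A w v := (hsemi v w hvw).resolve_left hAvw
  by_cases hwu : A w u
  · exact hD4 ⟨u, w, v, huw, Ne.symm hvw, huv, hAuw, hwv, hvu, hwu, hAvw, hAuv⟩
  · exact hC3 ⟨u, w, v, huw, Ne.symm hvw, huv, hAuw, hwv, hvu, hwu, hAvw, hAuv⟩
end

section
/- Every semicomplete loopless digraph G = (V,A) containing no induced subdigraph isomorphic to the directed 3-cycle C3 or to D4 has a spanning transitive tournament subdigraph, i.e., there exists A' ⊆ A such that (V,A') is a transitive tournament. -/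
/-- Every semicomplete loopless digraph `(V, A)` without an induced `C3`
and without an induced `D4` has a spanning transitive tournament subdigraph. -/
theorem stmt9 {V : Type*} [Fintype V]
    (A : V → V → Prop) (hloopless : Irreflexive A)
    (hsemi : IsSemicomplete A)
    (hC3 : ¬ HasInducedC3 A) (hD4 : ¬ HasInducedD4 A) :
    ∃ A' : V → V → Prop,
      (∀ u v : V, A' u v → A u v) ∧
      (∀ u v : V, u ≠ v → Xor' (A' u v) (A' v u)) ∧
      (∀ u v w : V, A' u v → A' v w → u ≠ w → A' u w) := by
  classical
  -- Strict part of A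
  let S : V → V → Prop := fun u v => A u v ∧ ¬ A v u
  have Strans : ∀ x y z : V, S x y → S y z → S x z := by
    rintro x y z ⟨hxy, hnyx⟩ ⟨hyz, hnzy⟩
    have hxz : x ≠ z := by rintro rfl; exact hnyx hyz
    have hxy' : x ≠ y := by rintro rfl; exact hloopless x hxy
    have hyz' : y ≠ z := by rintro rfl; exact hloopless y hyz
    have hAxz : A x z := by
      by_contra hn
      have hzx : A z x := (hsemi x z hxz).resolve_left hn
      exact hC3 ⟨x, y, z, hxy', hyz', hxz, hxy, hyz, hzx, hnyx, hnzy, hn⟩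
    refine ⟨hAxz, fun hzx => ?_⟩
    exact hD4 ⟨z, x, y, hxz.symm, hxy', hyz'.symm, hzx, hxy, hyz, hAxz, hnyx, hnzy⟩
  let r : V → V → Prop := fun u v => u = v ∨ S u v
  haveI : IsPartialOrder V r :=
    { refl := fun a => Or.inl rfl
      trans := by
        intro a b c hab hbc
        rcases hab with rfl | hab
        · exact hbc
        rcases hbc with rfl | hbc
        · exact Or.inr hab
        · exact Or.inr (Strans a b c hab hbc)
      antisymm := by
        intro a b hab hba
        rcases hab with rfl | hab
        · rfl
        rcases hba with rfl | hba
        · rfl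
        exact absurd hba.1 hab.2 }
  obtain ⟨s, hlin, hrs⟩ := extend_partialOrder r
  haveI := hlin
  refine ⟨fun u v => u ≠ v ∧ s u v, ?_, ?_, ?_⟩
  · rintro u v ⟨huv, hsuv⟩
    by_cases hA : A u v
    · exact hA
    · have hvu : A v u := (hsemi u v huv).resolve_left hA
      have : S v u := ⟨hvu, hA⟩
      have : s v u := hrs v u (Or.inr this)
      exact absurd (Std.Antisymm.antisymm u v hsuv this) huv
  · intro u v huv
    rcases Std.Total.total (r := s) u v with h | h
    · refine Or.inl ⟨⟨huv, h⟩, ?_⟩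
      rintro ⟨hvu, h'⟩
      exact huv (Std.Antisymm.antisymm u v h h')
    · refine Or.inr ⟨⟨huv.symm, h⟩, ?_⟩
      rintro ⟨huv', h'⟩
      exact huv (Std.Antisymm.antisymm u v h' h)
  · rintro u v w ⟨huv, h1⟩ ⟨hvw, h2⟩ huw
    exact ⟨huw, IsTrans.trans u v w h1 h2⟩
end

section
/- For all integers k, ℓ ≥ 1: if G ∈ S_{k,ℓ}, then the converse digraph of G (obtained by reversing every arc) also belongs to S_{k,ℓ}. -/
lemma seqBefore_reverse {V : Type*} {q : List V} {u v : V} (h : SeqBefore q u v) :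
    SeqBefore q.reverse v u := by
  obtain ⟨l₁, l₂, l₃, rfl⟩ := h
  refine ⟨l₃.reverse, l₂.reverse, l₁.reverse, ?_⟩
  simp

lemma seqBefore_reverse_iff {V : Type*} {q : List V} {u v : V} :
    SeqBefore q.reverse u v ↔ SeqBefore q v u := by
  constructor
  · intro h
    have := seqBefore_reverse h
    simpa using this
  · exact seqBefore_reverse

/-- For all `k, ℓ ≥ 1`: if `G = (V, A) ∈ S_{k,ℓ}`, then the converse
digraph of `G`, obtained by reversing every arc, also belongs to `S_{k,ℓ}`. -/
theorem stmt10 {V : Type*} [Fintype V] [DecidableEq V]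
    (A : V → V → Prop) (hloopless : Irreflexive A)
    (k ℓ : ℕ) (hk : 1 ≤ k) (hℓ : 1 ≤ ℓ) (h : MemS A k ℓ) :
    MemS (fun u v : V => A v u) k ℓ := by
  obtain ⟨Q, hlen, hcount, hmem, harc⟩ := h
  refine ⟨Q.map List.reverse, by simpa using hlen, ?_, ?_, ?_⟩
  · intro v
    have : ∀ R : List (List V), ((R.map List.reverse).flatten.count v) = R.flatten.count v := by
      intro R
      induction R with
      | nil => simp
      | cons q R ih => simp [List.count_append, ih]
    rw [this Q]; exact hcount v
  · intro v
    obtain ⟨q, hq, hv⟩ := hmem v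
    exact ⟨q.reverse, List.mem_map_of_mem hq, by simpa using hv⟩
  · intro u v
    show A v u ↔ _
    rw [harc v u]
    constructor
    · rintro ⟨hne, q, hq, hb⟩
      exact ⟨hne.symm, q.reverse, List.mem_map_of_mem hq, seqBefore_reverse hb⟩
    · rintro ⟨hne, q, hq, hb⟩
      obtain ⟨r, hr, rfl⟩ := List.mem_map.mp hq
      exact ⟨hne.symm, r, hr, seqBefore_reverse_iff.mp hb⟩
end

section
/- For all integers k, ℓ ≥ 1: if G ∈ S_{k,ℓ} and G is a tournament, then the complement digraph co(G) also belongs to S_{k,ℓ}. -/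
lemma seqBefore_reverse_of {V : Type*} {q : List V} {u v : V} (h : SeqBefore q v u) :
    SeqBefore q.reverse u v := by
  obtain ⟨l₁, l₂, l₃, rfl⟩ := h
  exact ⟨l₃.reverse, l₂.reverse, l₁.reverse, by simp⟩

/-- For all `k, ℓ ≥ 1`: if `G = (V, A) ∈ S_{k,ℓ}` and `G` is a
tournament, then the complement digraph `co(G)` also belongs to `S_{k,ℓ}`. -/
theorem stmt11 {V : Type*} [Fintype V] [DecidableEq V]
    (A : V → V → Prop) (hloopless : Irreflexive A)
    (k ℓ : ℕ) (hk : 1 ≤ k) (hℓ : 1 ≤ ℓ) (h : MemS A k ℓ)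
    (htour : ∀ u v : V, u ≠ v → Xor' (A u v) (A v u)) :
    MemS (CoArc A) k ℓ := by
  obtain ⟨Q, hlen, hcount, hcover, harc⟩ := h
  refine ⟨Q.map List.reverse, by simpa using hlen, ?_, ?_, ?_⟩
  · intro v
    have : (Q.map List.reverse).flatten.count v = Q.flatten.count v := by
      simp only [List.count_flatten, List.map_map]
      exact congrArg List.sum (List.map_congr_left fun q _ => by simp [List.count_reverse])
    rw [this]; exact hcount v
  · intro v
    obtain ⟨q, hq, hv⟩ := hcover v
    exact ⟨q.reverse, List.mem_map_of_mem hq, by simpa using hv⟩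
  · intro u v
    constructor
    · rintro ⟨hne, hnA⟩
      have hA : A v u := ((htour u v hne).resolve_left (fun h' => hnA h'.1)).1
      obtain ⟨_, q, hq, hb⟩ := (harc v u).1 hA
      exact ⟨hne, q.reverse, List.mem_map_of_mem hq, seqBefore_reverse_iff.2 hb⟩
    · rintro ⟨hne, q', hq', hb⟩
      obtain ⟨q, hq, rfl⟩ := List.mem_map.1 hq'
      have hA : A v u := (harc v u).2 ⟨hne.symm, q, hq, seqBefore_reverse_iff.1 hb⟩
      refine ⟨hne, fun hA' => ?_⟩
      exact (htour u v hne).elim (fun h' => h'.2 hA) (fun h' => h'.2 hA')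
end

section
/- Let k ≥ 2 and G ∈ S_{k,1}. Then the complement digraph co(G) belongs to S_{k(k−1), 2(k−1)}. -/
open List

lemma seqBefore_iff_sublist {V : Type*} {q : List V} {u v : V} :
    SeqBefore q u v ↔ [u, v] <+ q := by
  constructor
  · rintro ⟨l₁, l₂, l₃, rfl⟩
    refine List.Sublist.trans ?_ (List.sublist_append_right l₁ _)
    exact List.Sublist.cons₂ u (List.singleton_sublist.mpr (by simp))
  · intro h
    induction q with
    | nil => simp at h
    | cons a t ih =>
      cases h with
      | cons _ h' =>
        obtain ⟨l₁, l₂, l₃, rfl⟩ := ih h'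
        exact ⟨a :: l₁, l₂, l₃, rfl⟩
      | cons_cons _ h' =>
        have hv : v ∈ t := List.singleton_sublist.mp h'
        obtain ⟨s, t', rfl⟩ := List.append_of_mem hv
        exact ⟨[], s, t', rfl⟩

lemma nodup_asymm {V : Type*} {q : List V} {u v : V} (hnd : q.Nodup)
    (h1 : [u, v] <+ q) (h2 : [v, u] <+ q) : False := by
  induction q with
  | nil => simp at h1
  | cons a t ih =>
    have hand : t.Nodup := hnd.of_cons
    have hant : a ∉ t := (List.nodup_cons.mp hnd).1
    cases h1 with
    | cons _ h1' =>
      cases h2 with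
      | cons _ h2' => exact ih hand h1' h2'
      | cons_cons _ h2' =>
        -- a = v, [u] <+ t, and [u,v] <+ t so v ∈ t
        exact hant (((List.Sublist.subset h1') (by simp)))
    | cons_cons _ h1' =>
      -- a = u, [v] <+ t
      cases h2 with
      | cons _ h2' =>
        exact hant (((List.Sublist.subset h2') (by simp)))
      | cons_cons _ h2' =>
        exact hant ((List.singleton_sublist.mp h2'))

lemma pair_sublist_flatten {V : Type*} {L : List (List V)} {u v : V}
    (h : [u, v] <+ L.flatten) :
    (∃ l ∈ L, [u, v] <+ l) ∨ ∃ l l', [l, l'] <+ L ∧ u ∈ l ∧ v ∈ l' := by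
  induction L with
  | nil => simp at h
  | cons a L ih =>
    rw [List.flatten_cons, List.sublist_append_iff] at h
    obtain ⟨x, y, hxy, hx, hy⟩ := h
    rcases x with _ | ⟨x1, x⟩
    · simp only [List.nil_append] at hxy
      subst hxy
      rcases ih hy with ⟨l, hl, hs⟩ | ⟨l, l', hll, hu, hv⟩
      · exact Or.inl ⟨l, List.mem_cons_of_mem _ hl, hs⟩
      · exact Or.inr ⟨l, l', hll.cons _, hu, hv⟩
    · rcases x with _ | ⟨x2, x⟩
      · simp only [List.cons_append, List.nil_append, List.cons.injEq] at hxy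
        obtain ⟨rfl, rfl⟩ := hxy
        have hu : u ∈ a := List.singleton_sublist.mp hx
        have hv : v ∈ L.flatten := List.singleton_sublist.mp hy
        obtain ⟨l', hl', hvl⟩ := List.mem_flatten.mp hv
        exact Or.inr ⟨a, l', List.Sublist.cons₂ a (List.singleton_sublist.mpr hl'), hu, hvl⟩
      · simp only [List.cons_append, List.cons.injEq] at hxy
        obtain ⟨rfl, rfl, hxy⟩ := hxy
        have : x = [] := by
          cases x with
          | nil => rfl
          | cons c x => simp at hxy
        subst this
        simp only [List.nil_append] at hxy
        subst hxy
        exact Or.inl ⟨a, List.mem_cons_self, hx⟩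

lemma unique_block {V : Type*} [DecidableEq V] {Q : List (List V)}
    (hc : ∀ x : V, Q.flatten.count x ≤ 1)
    {q q' : List V} (hq : q ∈ Q) (hq' : q' ∈ Q) {u : V} (hu : u ∈ q) (hu' : u ∈ q') :
    q = q' := by
  by_contra hne
  obtain ⟨s, t, rfl⟩ := List.append_of_mem hq
  have h2 : q' ∈ s ∨ q' ∈ t := by
    rcases List.mem_append.mp hq' with h | h
    · exact Or.inl h
    · rcases List.mem_cons.mp h with h | h
      · exact absurd h.symm hne
      · exact Or.inr h
  have hcu := hc u
  rw [List.flatten_append, List.flatten_cons] at hcu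
  simp only [List.count_append] at hcu
  have h1 : 0 < List.count u q := List.count_pos_iff.mpr hu
  have h3 : 0 < List.count u q' := List.count_pos_iff.mpr hu'
  rcases h2 with h | h
  · have := (List.Sublist.count_le u (List.sublist_flatten_of_mem h))
    omega
  · have := (List.Sublist.count_le u (List.sublist_flatten_of_mem h))
    omega

lemma two_blocks {V : Type*} [DecidableEq V] {Q : List (List V)}
    (hc : ∀ x : V, Q.flatten.count x ≤ 1)
    {q q' : List V} (h : [q, q'] <+ Q) {u : V} (hu : u ∈ q) (hu' : u ∈ q') : False := by
  obtain ⟨L₁, L₂, L₃, rfl⟩ := seqBefore_iff_sublist.mpr h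
  have hcu := hc u
  rw [List.flatten_append, List.flatten_cons, List.flatten_append, List.flatten_cons] at hcu
  simp only [List.count_append] at hcu
  have h1 : 0 < List.count u q := List.count_pos_iff.mpr hu
  have h3 : 0 < List.count u q' := List.count_pos_iff.mpr hu'
  omega

lemma dichotomy {V : Type*} {q : List V} {u v : V} (hu : u ∈ q) (hv : v ∈ q) (hne : u ≠ v) :
    [u, v] <+ q ∨ [v, u] <+ q := by
  obtain ⟨s, t, rfl⟩ := List.append_of_mem hu
  rcases List.mem_append.mp hv with h | h
  · exact Or.inr (List.Sublist.append (List.singleton_sublist.mpr h)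
      (List.singleton_sublist.mpr (by simp)))
  · rcases List.mem_cons.mp h with h | h
    · exact absurd h.symm hne
    · exact Or.inl (List.Sublist.trans
        (List.Sublist.cons₂ u (List.singleton_sublist.mpr h))
        (List.sublist_append_right s _))
/-- Let `k ≥ 2` and `G = (V, A) ∈ S_{k,1}`. Then the complement digraph
`co(G)` belongs to `S_{k(k-1), 2(k-1)}`. -/
theorem stmt12 {V : Type*} [Fintype V] [DecidableEq V]
    (A : V → V → Prop) (hloopless : Irreflexive A)
    (k : ℕ) (hk : 2 ≤ k) (h : MemS A k 1) :
    MemS (CoArc A) (k * (k - 1)) (2 * (k - 1)) := by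
  obtain ⟨Q, hlen, hcnt, hmem, harc⟩ := h
  -- rephrase the arc relation via sublists
  have hA : ∀ u v : V, A u v ↔ (u ≠ v ∧ ∃ q ∈ Q, [u, v] <+ q) := by
    intro u v
    rw [harc u v]
    unfold GArc
    simp only [seqBefore_iff_sublist]
  have hnd : ∀ q ∈ Q, q.Nodup := by
    intro q hq
    exact List.nodup_iff_count_le_one.mpr
      (fun x => le_trans ((List.sublist_flatten_of_mem hq).count_le x) (hcnt x))
  -- the construction
  set g : List V → List V → List V :=
    fun q q₀ => q₀.reverse.filter (fun x => decide (x ∉ q)) with hg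
  set f : List V → List V := fun q => q.reverse ++ (Q.map (g q)).flatten with hf
  refine ⟨Q.map f, ?_, ?_, ?_, ?_⟩
  · -- length
    have h1 : k ≤ k * (k - 1) := Nat.le_mul_of_pos_right k (by omega)
    rw [List.length_map]
    omega
  · -- count bound
    intro x
    have hone : ∀ b ∈ Q.map f, List.count x b ≤ 1 := by
      intro b hb
      obtain ⟨q, hq, rfl⟩ := List.mem_map.mp hb
      rw [hf]
      simp only [List.count_append]
      by_cases hxq : x ∈ q
      · have hz : List.count x ((Q.map (g q)).flatten) = 0 := by
          rw [List.count_eq_zero]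
          intro hmem'
          obtain ⟨l, hl, hxl⟩ := List.mem_flatten.mp hmem'
          obtain ⟨q₀, hq₀, rfl⟩ := List.mem_map.mp hl
          rw [hg] at hxl
          simp only [List.mem_filter, decide_eq_true_eq] at hxl
          exact hxl.2 hxq
        have h1 : List.count x q.reverse ≤ 1 := by
          rw [List.count_reverse]
          exact le_trans ((List.sublist_flatten_of_mem hq).count_le x) (hcnt x)
        omega
      · have hz : List.count x q.reverse = 0 := by
          rw [List.count_eq_zero, List.mem_reverse]
          exact hxq
        have h1 : List.count x ((Q.map (g q)).flatten) ≤ 1 := by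
          rw [List.count_flatten, List.map_map]
          have h2 : (List.map (List.count x ∘ g q) Q).sum ≤ (List.map (List.count x) Q).sum := by
            apply List.sum_le_sum
            intro q₀ _
            simp only [Function.comp_apply, hg]
            calc List.count x (q₀.reverse.filter (fun x => decide (x ∉ q)))
                ≤ List.count x q₀.reverse := List.Sublist.count_le x List.filter_sublist
              _ = List.count x q₀ := List.count_reverse
          calc (List.map (List.count x ∘ g q) Q).sum
              ≤ (List.map (List.count x) Q).sum := h2
            _ = List.count x Q.flatten := List.count_flatten.symm
            _ ≤ 1 := hcnt x
        omega
    have hsum : List.count x ((Q.map f).flatten) ≤ Q.length := by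
      rw [List.count_flatten]
      calc (List.map (List.count x) (Q.map f)).sum
          ≤ (List.map (List.count x) (Q.map f)).length • 1 :=
            List.sum_le_card_nsmul _ 1 (by
              intro y hy
              obtain ⟨b, hb, rfl⟩ := List.mem_map.mp hy
              exact hone b hb)
        _ = Q.length := by simp
    omega
  · -- membership
    intro v
    obtain ⟨q, hq, hv⟩ := hmem v
    refine ⟨f q, List.mem_map_of_mem hq, ?_⟩
    rw [hf]
    simp only [List.mem_append, List.mem_reverse]
    exact Or.inl hv
  · -- arc equivalence
    intro u v
    constructor
    · rintro ⟨hne, hnA⟩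
      have hnEx : ¬ ∃ q ∈ Q, [u, v] <+ q := by
        rintro ⟨q, hq, hs⟩
        exact hnA ((hA u v).mpr ⟨hne, q, hq, hs⟩)
      obtain ⟨qu, hqu, hu⟩ := hmem u
      obtain ⟨qv, hqv, hv⟩ := hmem v
      refine ⟨hne, f qu, List.mem_map_of_mem hqu, seqBefore_iff_sublist.mpr ?_⟩
      by_cases hquv : qu = qv
      · subst hquv
        rcases dichotomy hu hv hne with hcase | hcase
        · exact absurd ⟨qu, hqu, hcase⟩ hnEx
        · rw [hf]
          refine List.Sublist.trans ?_ (List.sublist_append_left _ _)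
          have := hcase.reverse
          simpa using this
      · have hvnq : v ∉ qu := fun hvin => hquv (unique_block hcnt hqu hqv hvin hv)
        rw [hf]
        have h1 : [u] <+ qu.reverse := List.singleton_sublist.mpr (List.mem_reverse.mpr hu)
        have h2 : [v] <+ (Q.map (g qu)).flatten := by
          rw [List.singleton_sublist, List.mem_flatten]
          refine ⟨g qu qv, List.mem_map_of_mem hqv, ?_⟩
          rw [hg]
          simp only [List.mem_filter, List.mem_reverse, decide_eq_true_eq]
          exact ⟨hv, hvnq⟩
        exact List.Sublist.append h1 h2
    · rintro ⟨hne, q', hq'mem, hsb⟩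
      refine ⟨hne, ?_⟩
      intro hAuv
      obtain ⟨-, qA, hqA, hsA⟩ := (hA u v).mp hAuv
      have huA : u ∈ qA := hsA.subset (by simp)
      have hvA : v ∈ qA := hsA.subset (by simp)
      obtain ⟨q, hq, rfl⟩ := List.mem_map.mp hq'mem
      have hsub : [u, v] <+ f q := seqBefore_iff_sublist.mp hsb
      rw [hf, List.sublist_append_iff] at hsub
      obtain ⟨x, y, hxy, hx, hy⟩ := hsub
      rcases x with _ | ⟨x1, x⟩
      · -- x = [], [u,v] <+ flatten part
        simp only [List.nil_append] at hxy
        subst hxy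
        rcases pair_sublist_flatten hy with ⟨b, hb, hsb'⟩ | ⟨b, b', hbb, hub, hvb⟩
        · obtain ⟨q₀, hq₀, rfl⟩ := List.mem_map.mp hb
          have h1 : [u, v] <+ q₀.reverse := hsb'.trans (by rw [hg]; exact List.filter_sublist)
          have hvu : [v, u] <+ q₀ := by
            have := h1.reverse
            simpa using this
          have huq₀ : u ∈ q₀ := hvu.subset (by simp)
          have heq : q₀ = qA := unique_block hcnt hq₀ hqA huq₀ huA
          subst heq
          exact nodup_asymm (hnd q₀ hq₀) hsA hvu
        · obtain ⟨s, hsQ, hmap⟩ := List.sublist_map_iff.mp hbb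
          rcases s with _ | ⟨qa, _ | ⟨qb, _ | ⟨c, s⟩⟩⟩
          · simp at hmap
          · simp at hmap
          · simp only [List.map_cons, List.map_nil, List.cons.injEq, and_true] at hmap
            obtain ⟨rfl, rfl⟩ := hmap
            have hua : u ∈ qa := by
              rw [hg] at hub
              simp only [List.mem_filter, List.mem_reverse] at hub
              exact hub.1
            have hvb' : v ∈ qb := by
              rw [hg] at hvb
              simp only [List.mem_filter, List.mem_reverse] at hvb
              exact hvb.1
            have hqaQ : qa ∈ Q := hsQ.subset (by simp)
            have hqbQ : qb ∈ Q := hsQ.subset (by simp)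
            have h1 : qa = qA := unique_block hcnt hqaQ hqA hua huA
            have h2 : qb = qA := unique_block hcnt hqbQ hqA hvb' hvA
            subst h1; subst h2
            exact two_blocks hcnt hsQ hua hua
          · simp at hmap
      · rcases x with _ | ⟨x2, x⟩
        · -- x = [u], y = [v]
          simp only [List.cons_append, List.nil_append, List.cons.injEq] at hxy
          obtain ⟨rfl, rfl⟩ := hxy
          have huq : u ∈ q := List.mem_reverse.mp (List.singleton_sublist.mp hx)
          have hvy : v ∈ (Q.map (g q)).flatten := List.singleton_sublist.mp hy
          obtain ⟨l, hl, hvl⟩ := List.mem_flatten.mp hvy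
          obtain ⟨q₀, hq₀, rfl⟩ := List.mem_map.mp hl
          have hvnq : v ∉ q := by
            rw [hg] at hvl
            simp only [List.mem_filter, decide_eq_true_eq] at hvl
            exact hvl.2
          have heq : q = qA := unique_block hcnt hq hqA huq huA
          exact hvnq (heq ▸ hvA)
        · -- x = [u, v]
          simp only [List.cons_append, List.cons.injEq] at hxy
          obtain ⟨rfl, rfl, hxy⟩ := hxy
          have hxe : x = [] := by
            cases x with
            | nil => rfl
            | cons c x => simp at hxy
          subst hxe
          have hvu : [v, u] <+ q := by
            have := hx.reverse
            simpa using this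
          have huq : u ∈ q := hvu.subset (by simp)
          have heq : q = qA := unique_block hcnt hq hqA huq huA
          subst heq
          exact nodup_asymm (hnd q hq) hsA hvu
end

section
/- A sequence q is simple if and only if the sequence digraph g({q}) is the union of g({F(q)}) and g({L(q)}); that is, all three digraphs have vertex set types(q), and the arc set of g({q}) equals the union of the arc sets of g({F(q)}) and g({L(q)}). -/
/-- The (0-based) position of the first item of type `t` in the sequence `q`. -/
def firstPos {V : Type*} [DecidableEq V] (q : List V) (t : V) : ℕ := q.idxOf t

/-- The (0-based) position of the last item of type `t` in the sequence `q`. -/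
def lastPos {V : Type*} [DecidableEq V] (q : List V) (t : V) : ℕ :=
  q.length - 1 - q.reverse.idxOf t

/-- The sequence `q` is simple: there are no two types `t, t'` occurring in `q` with
`first(q,t) < first(q,t') < last(q,t) < last(q,t')`. -/
def IsSimpleSeq {V : Type*} [DecidableEq V] (q : List V) : Prop :=
  ¬ ∃ t t' : V, t ∈ q ∧ t' ∈ q ∧
    firstPos q t < firstPos q t' ∧ firstPos q t' < lastPos q t ∧ lastPos q t < lastPos q t'

/-- `F(q)`: the subsequence of `q` keeping only the first item of each type. -/
def Fseq {V : Type*} [DecidableEq V] (q : List V) : List V := q.reverse.dedup.reverse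

/-- `L(q)`: the subsequence of `q` keeping only the last item of each type. -/
def Lseq {V : Type*} [DecidableEq V] (q : List V) : List V := q.dedup

section Aux

variable {V : Type*} [DecidableEq V]

lemma exists_split {l : List V} {i : ℕ} {u : V} (h : l[i]? = some u) :
    ∃ l₁ l₂ : List V, l = l₁ ++ u :: l₂ ∧ l₁.length = i := by
  induction l generalizing i with
  | nil => simp at h
  | cons a t ih =>
    cases i with
    | zero =>
      simp only [List.getElem?_cons_zero, Option.some.injEq] at h
      exact ⟨[], t, by simp [h], rfl⟩
    | succ n =>
      simp only [List.getElem?_cons_succ] at h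
      obtain ⟨l₁, l₂, rfl, hl⟩ := ih h
      exact ⟨a :: l₁, l₂, rfl, by simp [hl]⟩

lemma mem_of_getElem? {l : List V} {i : ℕ} {u : V} (h : l[i]? = some u) : u ∈ l := by
  obtain ⟨hi, rfl⟩ := List.getElem?_eq_some_iff.1 h
  exact List.getElem_mem hi

lemma seqBefore_iff_index {q : List V} {u v : V} :
    SeqBefore q u v ↔ ∃ i j : ℕ, i < j ∧ q[i]? = some u ∧ q[j]? = some v := by
  constructor
  · rintro ⟨l₁, l₂, l₃, rfl⟩
    refine ⟨l₁.length, l₁.length + l₂.length + 1, by omega, ?_, ?_⟩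
    · rw [List.getElem?_append_right le_rfl]; simp
    · rw [List.getElem?_append_right (by omega)]
      simp only [List.getElem?_cons]
      rw [if_neg (by omega),
        show l₁.length + l₂.length + 1 - l₁.length - 1 = l₂.length by omega,
        List.getElem?_append_right le_rfl]
      simp
  · rintro ⟨i, j, hij, hu, hv⟩
    obtain ⟨l₁, l₂, rfl, hl⟩ := exists_split hv
    have hu' : l₁[i]? = some u := by
      rwa [List.getElem?_append_left (by omega)] at hu
    obtain ⟨A, B, rfl, -⟩ := exists_split hu'
    exact ⟨A, B, l₂, by simp⟩

lemma firstPos_getElem {q : List V} {u : V} (h : u ∈ q) : q[firstPos q u]? = some u := by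
  rw [firstPos, List.getElem?_eq_getElem (List.idxOf_lt_length_iff.2 h)]
  simp [List.idxOf_get]

lemma firstPos_lt_length {q : List V} {u : V} (h : u ∈ q) : firstPos q u < q.length :=
  List.idxOf_lt_length_iff.2 h

lemma firstPos_le {q : List V} {u : V} {i : ℕ} (h : q[i]? = some u) : firstPos q u ≤ i := by
  induction q generalizing i with
  | nil => simp at h
  | cons a t ih =>
    rcases eq_or_ne a u with rfl | hau
    · simp [firstPos]
    · cases i with
      | zero => simp only [List.getElem?_cons_zero, Option.some.injEq] at h; exact absurd h hau
      | succ n =>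
        simp only [List.getElem?_cons_succ] at h
        rw [firstPos, List.idxOf_cons_ne _ hau]
        exact Nat.succ_le_succ (ih h)

lemma getElem?_reverse' {q : List V} {i : ℕ} (h : i < q.length) :
    q.reverse[i]? = q[q.length - 1 - i]? := by
  rw [List.getElem?_eq_getElem (by simpa), List.getElem?_eq_getElem (by omega)]
  exact congrArg some (List.getElem_reverse ..)

lemma lastPos_getElem {q : List V} {u : V} (h : u ∈ q) : q[lastPos q u]? = some u := by
  have h1 : u ∈ q.reverse := by simpa
  have h2 : q.reverse.idxOf u < q.length := by
    simpa using List.idxOf_lt_length_iff.2 h1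
  have := firstPos_getElem h1
  rw [firstPos, getElem?_reverse' h2] at this
  exact this

lemma lastPos_lt_length {q : List V} {u : V} (h : u ∈ q) : lastPos q u < q.length := by
  have : 0 < q.length := List.length_pos_iff.2 (List.ne_nil_of_mem h)
  rw [lastPos]; omega

lemma le_lastPos {q : List V} {u : V} {i : ℕ} (h : q[i]? = some u) : i ≤ lastPos q u := by
  have hi : i < q.length := by
    obtain ⟨hi, -⟩ := List.getElem?_eq_some_iff.1 h; exact hi
  have hrev : q.reverse[q.length - 1 - i]? = some u := by
    rw [getElem?_reverse' (by omega), show q.length - 1 - (q.length - 1 - i) = i by omega]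
    exact h
  have := firstPos_le hrev
  rw [firstPos] at this
  rw [lastPos]; omega

lemma seqBefore_iff_pos {q : List V} {u v : V} :
    SeqBefore q u v ↔ u ∈ q ∧ v ∈ q ∧ firstPos q u < lastPos q v := by
  rw [seqBefore_iff_index]
  constructor
  · rintro ⟨i, j, hij, hu, hv⟩
    exact ⟨mem_of_getElem? hu, mem_of_getElem? hv,
      lt_of_le_of_lt (firstPos_le hu) (lt_of_lt_of_le hij (le_lastPos hv))⟩
  · rintro ⟨hu, hv, hlt⟩
    exact ⟨_, _, hlt, firstPos_getElem hu, lastPos_getElem hv⟩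

lemma lastPos_inj {q : List V} {u v : V} (hu : u ∈ q) (hv : v ∈ q)
    (h : lastPos q u = lastPos q v) : u = v := by
  have h1 := lastPos_getElem hu
  have h2 := lastPos_getElem hv
  rw [h, h2, Option.some.injEq] at h1
  exact h1.symm

lemma firstPos_inj {q : List V} {u v : V} (hu : u ∈ q) (hv : v ∈ q)
    (h : firstPos q u = firstPos q v) : u = v :=
  (List.idxOf_inj hu).1 h

lemma not_seqBefore_both {q : List V} {u v : V} (hn : q.Nodup)
    (h1 : SeqBefore q u v) (h2 : SeqBefore q v u) : False := by
  obtain ⟨i, j, hij, hu, hv⟩ := seqBefore_iff_index.1 h1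
  obtain ⟨i', j', hij', hv', hu'⟩ := seqBefore_iff_index.1 h2
  have hi : i < q.length := (List.getElem?_eq_some_iff.1 hu).1
  have hj : j < q.length := (List.getElem?_eq_some_iff.1 hv).1
  have e1 : i = j' := (List.getElem?_inj hi hn).1 (hu.trans hu'.symm)
  have e2 : j = i' := (List.getElem?_inj hj hn).1 (hv.trans hv'.symm)
  omega

lemma union_suffix (l₁ X : List V) : ∃ Y : List V, l₁ ∪ X = Y ++ X := by
  induction l₁ with
  | nil => exact ⟨[], rfl⟩
  | cons a t ih =>
    obtain ⟨Y, hY⟩ := ih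
    rw [List.cons_union, hY]
    by_cases h : a ∈ Y ++ X
    · exact ⟨Y, List.insert_of_mem h⟩
    · exact ⟨a :: Y, List.insert_of_not_mem h⟩

lemma seqBefore_dedup_of {q : List V} {u v : V} (hu : u ∈ q) (hv : v ∈ q)
    (h : lastPos q u < lastPos q v) : SeqBefore q.dedup u v := by
  have hne : u ≠ v := fun e => by rw [e] at h; omega
  obtain ⟨l₁, l₂, rfl, hlen⟩ := exists_split (lastPos_getElem hv)
  have hgen : ∀ w : V, w ∈ l₂ → lastPos (l₁ ++ v :: l₂) v < lastPos (l₁ ++ v :: l₂) w := by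
    intro w hw
    obtain ⟨k, hk, hkw⟩ := List.getElem_of_mem hw
    have : (l₁ ++ v :: l₂)[l₁.length + 1 + k]? = some w := by
      rw [List.getElem?_append_right (by omega)]
      simp only [List.getElem?_cons]
      rw [if_neg (by omega), show l₁.length + 1 + k - l₁.length - 1 = k by omega,
        List.getElem?_eq_getElem hk]
      exact congrArg some hkw
    have := le_lastPos this
    omega
  have hvl₂ : v ∉ l₂ := fun hw => by have := hgen v hw; omega
  have hul₂ : u ∉ l₂ := fun hw => by have := hgen u hw; omega
  have hul₁ : u ∈ l₁ := by
    rcases List.mem_append.1 hu with h' | h'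
    · exact h'
    · rcases List.mem_cons.1 h' with h'' | h''
      · exact absurd h'' hne
      · exact absurd h'' hul₂
  rw [List.dedup_append, List.dedup_cons_of_notMem hvl₂]
  obtain ⟨Y, hY⟩ := union_suffix l₁ (v :: l₂.dedup)
  have huY : u ∈ Y := by
    have : u ∈ l₁ ∪ (v :: l₂.dedup) := List.mem_union_left hul₁ _
    rw [hY] at this
    rcases List.mem_append.1 this with h' | h'
    · exact h'
    · rcases List.mem_cons.1 h' with h'' | h''
      · exact absurd h'' hne
      · exact absurd (List.mem_dedup.1 h'') hul₂
  obtain ⟨Y₁, Y₂, rfl⟩ := List.append_of_mem huY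
  exact ⟨Y₁, Y₂, l₂.dedup, by rw [hY]; simp⟩

lemma seqBefore_dedup_iff {q : List V} {u v : V} :
    SeqBefore q.dedup u v ↔ u ∈ q ∧ v ∈ q ∧ lastPos q u < lastPos q v := by
  constructor
  · intro h
    obtain ⟨l₁, l₂, l₃, hd⟩ := h
    have hu : u ∈ q := List.mem_dedup.1 (by rw [hd]; simp)
    have hv : v ∈ q := List.mem_dedup.1 (by rw [hd]; simp)
    refine ⟨hu, hv, ?_⟩
    have hne : u ≠ v := by
      rintro rfl
      exact not_seqBefore_both (List.nodup_dedup q) ⟨l₁, l₂, l₃, hd⟩ ⟨l₁, l₂, l₃, hd⟩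
    have hne' : lastPos q u ≠ lastPos q v := fun e => hne (lastPos_inj hu hv e)
    by_contra hc
    have : lastPos q v < lastPos q u := by omega
    exact not_seqBefore_both (List.nodup_dedup q) ⟨l₁, l₂, l₃, hd⟩
      (seqBefore_dedup_of hv hu this)
  · rintro ⟨hu, hv, h⟩
    exact seqBefore_dedup_of hu hv h

lemma seqBefore_reverse_imp {l : List V} {u v : V} (h : SeqBefore l.reverse u v) :
    SeqBefore l v u := by
  obtain ⟨l₁, l₂, l₃, hd⟩ := h
  refine ⟨l₃.reverse, l₂.reverse, l₁.reverse, ?_⟩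
  have := congrArg List.reverse hd
  rw [List.reverse_reverse] at this
  rw [this]
  simp

lemma seqBefore_reverse_s14 {l : List V} {u v : V} :
    SeqBefore l.reverse u v ↔ SeqBefore l v u := by
  constructor
  · exact seqBefore_reverse_imp
  · intro h
    apply seqBefore_reverse_imp
    rwa [List.reverse_reverse]

lemma lastPos_reverse (q : List V) (t : V) :
    lastPos q.reverse t = q.length - 1 - firstPos q t := by
  rw [lastPos, firstPos, List.reverse_reverse, List.length_reverse]

lemma seqBefore_Fseq_iff {q : List V} {u v : V} :
    SeqBefore (Fseq q) u v ↔ u ∈ q ∧ v ∈ q ∧ firstPos q u < firstPos q v := by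
  rw [Fseq, seqBefore_reverse_s14, seqBefore_dedup_iff, List.mem_reverse, List.mem_reverse,
    lastPos_reverse, lastPos_reverse]
  constructor
  · rintro ⟨hv, hu, hlt⟩
    have h1 := firstPos_lt_length hu
    have h2 := firstPos_lt_length hv
    exact ⟨hu, hv, by omega⟩
  · rintro ⟨hu, hv, hlt⟩
    have h1 := firstPos_lt_length hu
    have h2 := firstPos_lt_length hv
    exact ⟨hv, hu, by omega⟩

lemma first_le_last {q : List V} {u : V} (h : u ∈ q) : firstPos q u ≤ lastPos q u :=
  le_lastPos (firstPos_getElem h)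

end Aux

/-- A sequence `q` is simple if and only if the sequence digraph
`g({q})` is the union of `g({F(q)})` and `g({L(q)})` (all three digraphs have vertex set
`types(q)`, and the arc set of `g({q})` is the union of the two other arc sets). -/
theorem stmt14 {V : Type*} [DecidableEq V] (q : List V) :
    IsSimpleSeq q ↔
      ∀ u v : V, GArc [q] u v ↔ (GArc [Fseq q] u v ∨ GArc [Lseq q] u v) := by
  have harc : ∀ (p : List V) (u v : V), GArc [p] u v ↔ (u ≠ v ∧ SeqBefore p u v) := by
    intro p u v
    simp [GArc]
  constructor
  · intro hs u v
    rw [harc, harc, harc, Lseq, seqBefore_iff_pos, seqBefore_Fseq_iff, seqBefore_dedup_iff]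
    constructor
    · rintro ⟨hne, hu, hv, hlt⟩
      by_cases h1 : firstPos q u < firstPos q v
      · exact Or.inl ⟨hne, hu, hv, h1⟩
      · refine Or.inr ⟨hne, hu, hv, ?_⟩
        by_contra h2
        have hf : firstPos q u ≠ firstPos q v := fun e => hne (firstPos_inj hu hv e)
        have hl : lastPos q u ≠ lastPos q v := fun e => hne (lastPos_inj hu hv e)
        exact hs ⟨v, u, hv, hu, by omega, by omega, by omega⟩
    · rintro (⟨hne, hu, hv, hlt⟩ | ⟨hne, hu, hv, hlt⟩)
      · have := first_le_last hv
        exact ⟨hne, hu, hv, by omega⟩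
      · have := first_le_last hu
        exact ⟨hne, hu, hv, by omega⟩
  · intro h
    rintro ⟨t, t', ht, ht', h1, h2, h3⟩
    have hne : t' ≠ t := by
      rintro rfl; omega
    have := (h t' t).1 (by
      rw [harc, seqBefore_iff_pos]
      exact ⟨hne, ht', ht, h2⟩)
    rw [harc, harc, Lseq, seqBefore_Fseq_iff, seqBefore_dedup_iff] at this
    rcases this with ⟨-, -, -, hlt⟩ | ⟨-, -, -, hlt⟩
    · omega
    · omega
end

section
/- Let k ≥ 1 and let G ∈ S_{k,1} be a digraph with at least one vertex. Then the directed path-width of G equals 0. -/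
/-- `X` is a directed path-decomposition of the digraph `(V, A)`. -/
def IsDPD {V : Type*} (A : V → V → Prop) (X : List (Finset V)) : Prop :=
  (∀ v : V, ∃ B ∈ X, v ∈ B) ∧
  (∀ u v : V, A u v → ∃ i j : Fin X.length, i ≤ j ∧ u ∈ X.get i ∧ v ∈ X.get j) ∧
  (∀ (u : V) (i j m : Fin X.length),
      i ≤ m → m ≤ j → u ∈ X.get i → u ∈ X.get j → u ∈ X.get m)

/-- The directed path-width of the digraph `(V, A)`: the least `w` such that some
directed path-decomposition has all bags of size at most `w + 1`. -/
noncomputable def dpw {V : Type*} (A : V → V → Prop) : ℕ :=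
  sInf { w : ℕ | ∃ X : List (Finset V), IsDPD A X ∧ ∀ B ∈ X, B.card ≤ w + 1 }

lemma key {V : Type*} (L C D : List V) (u v : V) (hL : L = C ++ u :: D)
    (hv : v ∈ D) :
    ∃ i j : Fin L.length, (i:ℕ) < j ∧ L.get i = u ∧ L.get j = v := by
  subst hL
  obtain ⟨k, hk⟩ := List.mem_iff_get.mp hv
  have hkl : (k:ℕ) < D.length := k.isLt
  refine ⟨⟨C.length, by simp⟩, ⟨C.length + 1 + k, by simp; omega⟩,
    by simp; omega, ?_, ?_⟩
  · simp [List.get_eq_getElem, List.getElem_append_right]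
  · simp only [List.get_eq_getElem]
    simp only [show C ++ u :: D = (C ++ [u]) ++ D from by simp]
    rw [List.getElem_append_right (by simp)]
    simp only [List.length_append, List.length_cons, List.length_nil,
      Nat.add_zero, Nat.add_sub_cancel_left, Nat.add_sub_cancel]
    simpa using hk

/-- Let `k ≥ 1` and let `G = (V, A) ∈ S_{k,1}` have at least one vertex.
Then the directed path-width of `G` equals `0`. -/
theorem stmt15 {V : Type*} [Fintype V] [DecidableEq V] [Nonempty V]
    (A : V → V → Prop) (hloopless : Irreflexive A)
    (k : ℕ) (hk : 1 ≤ k) (h : MemS A k 1) :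
    dpw A = 0 := by
  obtain ⟨Q, hQlen, hcount, hcover, hiff⟩ := h
  set L : List V := Q.flatten with hLdef
  have hnodup : L.Nodup := List.nodup_iff_count_le_one.mpr hcount
  have hmemL : ∀ v : V, v ∈ L := by
    intro v
    obtain ⟨q, hq, hvq⟩ := hcover v
    exact List.mem_flatten.mpr ⟨q, hq, hvq⟩
  set X : List (Finset V) := L.map (fun a => ({a} : Finset V)) with hX
  have hXlen : X.length = L.length := List.length_map _
  have hget : ∀ i : Fin X.length, X.get i = {L.get (Fin.cast hXlen i)} := by
    intro i
    simp [hX, List.get_eq_getElem]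
  have hDPD : IsDPD A X := by
    refine ⟨?_, ?_, ?_⟩
    · intro v
      exact ⟨{v}, List.mem_map.mpr ⟨v, hmemL v, rfl⟩, Finset.mem_singleton_self v⟩
    · intro u v hA
      obtain ⟨hne, q, hqQ, l₁, l₂, l₃, hq⟩ := (hiff u v).mp hA
      obtain ⟨Q₁, Q₂, hQ⟩ := List.append_of_mem hqQ
      have hL : L = (Q₁.flatten ++ l₁) ++ u :: (l₂ ++ v :: (l₃ ++ Q₂.flatten)) := by
        simp [hLdef, hQ, hq]
      obtain ⟨i, j, hij, hiu, hjv⟩ := key L _ _ u v hL (by simp)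
      refine ⟨Fin.cast hXlen.symm i, Fin.cast hXlen.symm j, ?_, ?_, ?_⟩
      · exact Fin.le_def.mpr (le_of_lt hij)
      · rw [hget]; simp; exact hiu.symm
      · rw [hget]; simp; exact hjv.symm
    · intro u i j m him hmj hui huj
      have h1 : L.get (Fin.cast hXlen i) = u := by
        have := hget i; rw [this] at hui; simp at hui; exact hui.symm
      have h2 : L.get (Fin.cast hXlen j) = u := by
        have := hget j; rw [this] at huj; simp at huj; exact huj.symm
      have : Fin.cast hXlen i = Fin.cast hXlen j := by
        apply List.nodup_iff_injective_get.mp hnodup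
        rw [h1, h2]
      have hij : i = j := by
        apply Fin.ext
        have := congrArg Fin.val this
        simpa using this
      have : m = i := le_antisymm (hij ▸ hmj) him
      rw [this]; exact hui
  have h0 : (0 : ℕ) ∈ { w : ℕ | ∃ X : List (Finset V), IsDPD A X ∧ ∀ B ∈ X, B.card ≤ w + 1 } := by
    refine ⟨X, hDPD, ?_⟩
    intro B hB
    obtain ⟨a, _, rfl⟩ := List.mem_map.mp hB
    simp
  exact Nat.sInf_eq_zero.mpr (Or.inl h0)
end

section
/- Let q be a single nonempty sequence and G = g({q}) its sequence digraph. Then dpw(G) = ω(I(q)) − 1, where ω(I(q)) denotes the clique number of the interval graph I(q) of q. -/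
/-- The interval graph `I(q)` of a sequence `q`: distinct types `u, v` are adjacent iff
their intervals `[first(q,u), last(q,u)]` and `[first(q,v), last(q,v)]` intersect. -/
def intervalGraph {V : Type*} [DecidableEq V] (q : List V) : SimpleGraph V :=
  SimpleGraph.fromRel fun u v =>
    firstPos q u ≤ lastPos q v ∧ firstPos q v ≤ lastPos q u

namespace Stmt16Aux

variable {V : Type*} [DecidableEq V] {q : List V} {u v : V} {p p' : ℕ}

lemma firstPos_lt (h : v ∈ q) : firstPos q v < q.length :=
  List.idxOf_lt_length_iff.mpr h

lemma getElem_firstPos (h : v ∈ q) : q[firstPos q v]'(firstPos_lt h) = v :=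
  List.getElem_idxOf _

lemma firstPos_le (hp : p < q.length) (hv : q[p] = v) : firstPos q v ≤ p := by
  by_contra h
  push_neg at h
  have := List.not_of_lt_findIdx (p := (· == v)) (xs := q) (i := p)
    (by simpa [firstPos, List.idxOf] using h)
  simp [hv] at this

lemma lastPos_lt (h : v ∈ q) : lastPos q v < q.length := by
  have : 0 < q.length := List.length_pos_iff.mpr (by rintro rfl; simp at h)
  unfold lastPos; omega

lemma getElem_lastPos (h : v ∈ q) : q[lastPos q v]'(lastPos_lt h) = v := by
  have hr : q.reverse.idxOf v < q.reverse.length :=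
    List.idxOf_lt_length_iff.mpr (by simpa using h)
  have h1 : q.reverse[q.reverse.idxOf v]'hr = v := List.getElem_idxOf _
  rw [List.getElem_reverse] at h1
  simpa [lastPos, List.length_reverse] using h1

lemma le_lastPos (hp : p < q.length) (hv : q[p] = v) : p ≤ lastPos q v := by
  have hrlen : q.length - 1 - p < q.reverse.length := by simp; omega
  have h1 : q.reverse[q.length - 1 - p]'hrlen = q[q.length - 1 - (q.length - 1 - p)]'(by omega) :=
    List.getElem_reverse _
  have h2 : q.length - 1 - (q.length - 1 - p) = p := by omega
  simp only [h2] at h1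
  rw [hv] at h1
  have := firstPos_le (q := q.reverse) (by simpa using hrlen) h1
  simp only [firstPos] at this
  unfold lastPos
  omega

lemma firstPos_le_lastPos (h : v ∈ q) : firstPos q v ≤ lastPos q v :=
  le_lastPos (firstPos_lt h) (getElem_firstPos h)

lemma seqBefore_of_lt (hp' : p' < q.length) (hpp : p < p')
    (hu : q[p]'(lt_trans hpp hp') = u) (hv : q[p'] = v) : SeqBefore q u v := by
  have hp : p < q.length := lt_trans hpp hp'
  refine ⟨q.take p, (q.drop (p+1)).take (p' - p - 1), q.drop (p'+1), ?_⟩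
  have e1 : q.drop p = u :: q.drop (p+1) := by
    rw [List.drop_eq_getElem_cons hp, hu]
  have e2 : q.drop (p+1) =
      (q.drop (p+1)).take (p' - p - 1) ++ v :: q.drop (p'+1) := by
    have h3 : (q.drop (p+1)).drop (p' - p - 1) = q.drop p' := by
      rw [List.drop_drop]; congr 1; omega
    have h4 : q.drop p' = v :: q.drop (p'+1) := by
      rw [List.drop_eq_getElem_cons hp', hv]
    conv_lhs => rw [← List.take_append_drop (p' - p - 1) (q.drop (p+1))]
    rw [h3, h4]
  conv_lhs => rw [← List.take_append_drop p q, e1, e2]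

lemma exists_lt_of_seqBefore (h : SeqBefore q u v) :
    ∃ p p', ∃ (hp : p < q.length) (hp' : p' < q.length), p < p' ∧ q[p] = u ∧ q[p'] = v := by
  obtain ⟨l₁, l₂, l₃, rfl⟩ := h
  refine ⟨l₁.length, l₁.length + l₂.length + 1, by simp, by simp; omega, by omega, ?_, ?_⟩
  · rw [List.getElem_append_right le_rfl]
    simp
  · rw [List.getElem_append_right (by omega)]
    have : l₁.length + l₂.length + 1 - l₁.length = l₂.length + 1 := by omega
    simp only [this, List.getElem_cons_succ]
    rw [List.getElem_append_right le_rfl]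
    simp

lemma firstPos_lt_lastPos_of_garc (h : GArc [q] u v) : firstPos q u < lastPos q v := by
  obtain ⟨hne, q', hq', hsb⟩ := h
  simp only [List.mem_singleton] at hq'
  subst hq'
  obtain ⟨p, p', hp, hp', hpp, hu, hv⟩ := exists_lt_of_seqBefore hsb
  have h1 := firstPos_le hp hu
  have h2 := le_lastPos hp' hv
  omega

lemma garc_of_lt (huv : u ≠ v) (hu : u ∈ q) (hv : v ∈ q)
    (h : firstPos q u < lastPos q v) : GArc [q] u v :=
  ⟨huv, q, by simp,
    seqBefore_of_lt (lastPos_lt hv) h (getElem_firstPos hu) (getElem_lastPos hv)⟩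

lemma garc_of_adj (hu : u ∈ q) (hv : v ∈ q) (h : (intervalGraph q).Adj u v) :
    GArc [q] u v := by
  rw [intervalGraph, SimpleGraph.fromRel_adj] at h
  obtain ⟨hne, hor⟩ := h
  have hfl : firstPos q u ≤ lastPos q v := by tauto
  have hne' : firstPos q u ≠ lastPos q v := by
    intro he
    apply hne
    have h1 := getElem_firstPos hu
    have h2 := getElem_lastPos hv
    rw [← h1, ← h2]
    simp only [he]
  exact garc_of_lt hne hu hv (lt_of_le_of_ne hfl hne')

end Stmt16Aux

open Stmt16Aux in
/-- Let `q` be a single nonempty sequence and `G = g({q})` its sequence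
digraph. Then `dpw(G) = ω(I(q)) - 1`, where `ω(I(q))` is the clique number of the interval
graph of `q`. -/
theorem stmt16 {V : Type*} [Fintype V] [DecidableEq V]
    (q : List V) (hne : q ≠ []) (hall : ∀ v : V, v ∈ q) :
    dpw (GArc [q]) = (intervalGraph q).cliqueNum - 1 := by
  classical
  set S := { w : ℕ | ∃ X : List (Finset V), IsDPD (GArc [q]) X ∧ ∀ B ∈ X, B.card ≤ w + 1 }
    with hS
  -- the bags of the canonical decomposition
  set bag : ℕ → Finset V :=
    (fun i => Finset.univ.filter fun v => firstPos q v ≤ i ∧ i ≤ lastPos q v) with hbagdef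
  have hbag : ∀ i v, v ∈ bag i ↔ firstPos q v ≤ i ∧ i ≤ lastPos q v := by
    intro i v; simp [hbagdef]
  set X : List (Finset V) := (List.range q.length).map bag with hXdef
  have hXlen : X.length = q.length := by simp [hXdef]
  have hXget : ∀ (i : Fin X.length), X.get i = bag i := by
    intro i
    simp [hXdef, List.get_eq_getElem]
  -- X is a directed path-decomposition
  have hdpd : IsDPD (GArc [q]) X := by
    refine ⟨?_, ?_, ?_⟩
    · intro v
      refine ⟨bag (firstPos q v), ?_, ?_⟩
      · simp only [hXdef, List.mem_map]
        exact ⟨firstPos q v, List.mem_range.mpr (firstPos_lt (hall v)), rfl⟩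
      · exact (hbag _ _).mpr ⟨le_rfl, firstPos_le_lastPos (hall v)⟩
    · intro u v h
      have hlt := firstPos_lt_lastPos_of_garc h
      have hu := hall u; have hv := hall v
      refine ⟨⟨firstPos q u, by rw [hXlen]; exact firstPos_lt hu⟩,
              ⟨lastPos q v, by rw [hXlen]; exact lastPos_lt hv⟩, ?_, ?_, ?_⟩
      · exact Fin.mk_le_mk.mpr (le_of_lt hlt)
      · rw [hXget]; exact (hbag _ _).mpr ⟨le_rfl, firstPos_le_lastPos hu⟩
      · rw [hXget]; exact (hbag _ _).mpr ⟨firstPos_le_lastPos hv, le_rfl⟩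
    · intro u i j m him hmj hi hj
      rw [hXget] at hi hj ⊢
      rw [hbag] at hi hj ⊢
      have h1 : (i : ℕ) ≤ (m : ℕ) := him
      have h2 : (m : ℕ) ≤ (j : ℕ) := hmj
      omega
  -- every bag is a clique of the interval graph
  have hclique : ∀ i : ℕ, (intervalGraph q).IsClique (bag i) := by
    intro i u hu v hv huv
    rw [Finset.mem_coe, hbag] at hu hv
    rw [intervalGraph, SimpleGraph.fromRel_adj]
    exact ⟨huv, Or.inl ⟨le_trans hu.1 hv.2, le_trans hv.1 hu.2⟩⟩
  -- membership of ω - 1 in S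
  have hmem : (intervalGraph q).cliqueNum - 1 ∈ S := by
    refine ⟨X, hdpd, ?_⟩
    intro B hB
    simp only [hXdef, List.mem_map] at hB
    obtain ⟨i, -, rfl⟩ := hB
    have h1 : (bag i).card ≤ (intervalGraph q).cliqueNum :=
      SimpleGraph.IsClique.card_le_cliqueNum (tc := hclique i)
    omega
  -- lower bound
  have hlb : ∀ w ∈ S, (intervalGraph q).cliqueNum - 1 ≤ w := by
    rintro w ⟨Y, hY, hcard⟩
    obtain ⟨K, hK⟩ := SimpleGraph.exists_isNClique_cliqueNum (G := intervalGraph q)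
    rcases Finset.eq_empty_or_nonempty K with rfl | hK0
    · have := hK.card_eq
      simp only [Finset.card_empty] at this
      omega
    · have hidx : ∀ v : V, ∃ i : Fin Y.length, v ∈ Y.get i := by
        intro v
        obtain ⟨B, hB, hvB⟩ := hY.1 v
        obtain ⟨i, hi⟩ := List.mem_iff_get.mp hB
        exact ⟨i, hi ▸ hvB⟩
      set I : V → Finset (Fin Y.length) :=
        (fun v => Finset.univ.filter fun i => v ∈ Y.get i) with hIdef
      have hIne : ∀ v, (I v).Nonempty := by
        intro v
        obtain ⟨i, hi⟩ := hidx v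
        simp only [List.get_eq_getElem] at hi
        exact ⟨i, by simp [hIdef, hi]⟩
      set a : V → Fin Y.length := (fun v => (I v).min' (hIne v)) with hadef
      set b : V → Fin Y.length := (fun v => (I v).max' (hIne v)) with hbdef
      have haI : ∀ v, v ∈ Y.get (a v) := by
        intro v
        have := (I v).min'_mem (hIne v)
        simpa [hIdef, hadef] using this
      have hbI : ∀ v, v ∈ Y.get (b v) := by
        intro v
        have := (I v).max'_mem (hIne v)
        simpa [hIdef, hbdef] using this
      have hab : ∀ u v : V, GArc [q] u v → a u ≤ b v := by
        intro u v h
        obtain ⟨i, j, hij, hui, hvj⟩ := hY.2.1 u v h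
        simp only [List.get_eq_getElem] at hui hvj
        have h1 : a u ≤ i := Finset.min'_le _ _ (by simp [hIdef, hui])
        have h2 : j ≤ b v := Finset.le_max' _ _ (by simp [hIdef, hvj])
        exact le_trans h1 (le_trans hij h2)
      have hKne' : (K.image a).Nonempty := hK0.image a
      set m := (K.image a).max' hKne' with hm
      obtain ⟨v0, hv0K, hv0⟩ := Finset.mem_image.mp ((K.image a).max'_mem hKne')
      rw [← hm] at hv0
      have hsub : ∀ v ∈ K, v ∈ Y.get m := by
        intro v hvK
        have h1 : a v ≤ m := Finset.le_max' _ _ (Finset.mem_image_of_mem a hvK)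
        have h2 : m ≤ b v := by
          rcases eq_or_ne v0 v with rfl | hne'
          · rw [← hv0]
            exact Finset.min'_le _ _ ((I v0).max'_mem (hIne v0))
          · have hadj : (intervalGraph q).Adj v0 v :=
              hK.isClique (Finset.mem_coe.mpr hv0K) (Finset.mem_coe.mpr hvK) hne'
            rw [← hv0]
            exact hab _ _ (garc_of_adj (hall v0) (hall v) hadj)
        exact hY.2.2 v (a v) (b v) m h1 h2 (haI v) (hbI v)
      have hcards : K.card ≤ (Y.get m).card :=
        Finset.card_le_card (fun v hv => hsub v hv)
      have hYm : Y.get m ∈ Y := Y.get_mem m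
      have h3 := hcard _ hYm
      have h4 := hK.card_eq
      omega
  exact le_antisymm (Nat.sInf_le hmem) (le_csInf ⟨_, hmem⟩ hlb)
end

section
/- Let Q = {q_1,…,q_k} be a set of sequences containing at least one item in total, and let (v_0,…,v_r) ∈ P(Q) be any path in the state digraph from the initial to the final state, where r = n_1 + … + n_k. Then the sequence of bags (active(v_1),…,active(v_r)) is a directed path-decomposition of the sequence digraph g(Q). -/
/-- The total number of items of a set of sequences. -/
def totalLen {V : Type*} (Q : List (List V)) : ℕ := Q.flatten.length

/-- One step in the state digraph: exactly one coordinate increases by one. -/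
def StateStep {k : ℕ} (s s' : Fin k → ℕ) : Prop :=
  ∃ j : Fin k, s' j = s j + 1 ∧ ∀ j' : Fin k, j' ≠ j → s' j' = s j'

/-- `P 0, P 1, …, P (totalLen Q)` is a directed path in the state digraph `s(Q)` from
the initial state `(0,…,0)` to the final state `(n₁,…,n_k)`. -/
def IsStatePath {V : Type*} (Q : List (List V)) (P : ℕ → Fin Q.length → ℕ) : Prop :=
  (∀ j, P 0 j = 0) ∧
  (∀ j, P (totalLen Q) j = (Q.get j).length) ∧
  (∀ i < totalLen Q, StateStep (P i) (P (i + 1)))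

/-- `active(s)` for a state `s`: the set of types `t` such that either an item of type `t`
has been scanned (lies in `L(s)`) and another one has not (lies in `R(s)`), or the unique
item of type `t` in `Q` is at position exactly `s j` (1-based) of its sequence (lies in `M(s)`). -/
def activeSet {V : Type*} [DecidableEq V] (Q : List (List V)) (s : Fin Q.length → ℕ) : Set V :=
  { t | ((∃ (j : Fin Q.length) (p : ℕ), p < s j ∧ (Q.get j)[p]? = some t) ∧
         (∃ (j : Fin Q.length) (p : ℕ), s j ≤ p ∧ (Q.get j)[p]? = some t)) ∨
        (∃ (j : Fin Q.length) (p : ℕ), p + 1 = s j ∧ (Q.get j)[p]? = some t ∧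
         Q.flatten.count t = 1) }

/-- `active(s)` as a finset. -/
noncomputable def activeFinset {V : Type*} [Fintype V] [DecidableEq V]
    (Q : List (List V)) (s : Fin Q.length → ℕ) : Finset V :=
  (Set.toFinite (activeSet Q s)).toFinset

private lemma getq_mid {V : Type*} (l₁ : List V) (x : V) (l₂ : List V) :
    (l₁ ++ x :: l₂)[l₁.length]? = some x := by
  rw [List.getElem?_append_right le_rfl]; simp

private lemma get?_mem' {V : Type*} {l : List V} {n : ℕ} {a : V}
    (h : l[n]? = some a) : a ∈ l := by
  obtain ⟨hn, hv⟩ := List.getElem?_eq_some_iff.mp h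
  exact hv ▸ List.getElem_mem hn

private lemma mem_get?' {V : Type*} {l : List V} {a : V} (h : a ∈ l) :
    ∃ n : ℕ, l[n]? = some a := by
  obtain ⟨n, hn⟩ := List.mem_iff_get.mp h
  exact ⟨n.1, List.getElem?_eq_some_iff.mpr ⟨n.isLt, by simpa using hn⟩⟩

private lemma two_le_count {V : Type*} [DecidableEq V] {l : List V} {t : V} {p p' : ℕ}
    (hne : p ≠ p') (hp : l[p]? = some t) (hp' : l[p']? = some t) : 2 ≤ l.count t := by
  induction l generalizing p p' with
  | nil => simp at hp
  | cons a l ih =>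
    match p, p' with
    | 0, 0 => exact absurd rfl hne
    | 0, n+1 =>
      simp only [List.getElem?_cons_zero, Option.some.injEq] at hp
      simp only [List.getElem?_cons_succ] at hp'
      subst hp
      have h1 : 0 < l.count a := List.count_pos_iff.mpr (get?_mem' hp')
      rw [List.count_cons_self]; omega
    | n+1, 0 =>
      simp only [List.getElem?_cons_zero, Option.some.injEq] at hp'
      simp only [List.getElem?_cons_succ] at hp
      subst hp'
      have h1 : 0 < l.count a := List.count_pos_iff.mpr (get?_mem' hp)
      rw [List.count_cons_self]; omega
    | n+1, m+1 =>
      simp only [List.getElem?_cons_succ] at hp hp'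
      have := ih (by omega) hp hp'
      rw [List.count_cons]; split <;> omega

private lemma exists_two_of_count {V : Type*} [DecidableEq V] {l : List V} {t : V}
    (h : 2 ≤ l.count t) :
    ∃ p p' : ℕ, p ≠ p' ∧ l[p]? = some t ∧ l[p']? = some t := by
  induction l with
  | nil => simp at h
  | cons a l ih =>
    by_cases hat : a = t
    · subst hat
      rw [List.count_cons_self] at h
      have h1 : 0 < l.count a := by omega
      obtain ⟨n, hn⟩ := mem_get?' (List.count_pos_iff.mp h1)
      exact ⟨0, n + 1, by omega, rfl, by simpa using hn⟩
    · rw [List.count_cons_of_ne hat] at h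
      obtain ⟨p, p', hne, hp, hp'⟩ := ih h
      exact ⟨p + 1, p' + 1, by omega, by simpa using hp, by simpa using hp'⟩

private lemma count_flatten_fin {V : Type*} [DecidableEq V] (Q : List (List V)) (t : V) :
    Q.flatten.count t = ∑ j : Fin Q.length, (Q.get j).count t := by
  rw [List.count_flatten]
  conv_lhs => rw [← List.ofFn_get Q, List.map_ofFn, List.sum_ofFn]
  rfl

private lemma count_one_unique {V : Type*} [DecidableEq V] {l : List V} {t : V}
    (h : l.count t = 1) {p p' : ℕ} (hp : l[p]? = some t) (hp' : l[p']? = some t) :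
    p = p' := by
  by_contra hne
  have := two_le_count hne hp hp'
  omega

private lemma occ_unique {V : Type*} [DecidableEq V] {Q : List (List V)} {t : V}
    (h : Q.flatten.count t = 1) {j j' : Fin Q.length} {p p' : ℕ}
    (hp : (Q.get j)[p]? = some t) (hp' : (Q.get j')[p']? = some t) :
    j = j' ∧ p = p' := by
  have hsum := count_flatten_fin Q t
  have hj : 0 < (Q.get j).count t := List.count_pos_iff.mpr (get?_mem' hp)
  have hj' : 0 < (Q.get j').count t := List.count_pos_iff.mpr (get?_mem' hp')
  have hjj : j = j' := by
    by_contra hne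
    have h2 := Finset.add_le_sum (f := fun j => (Q.get j).count t)
      (fun _ _ => Nat.zero_le _) (Finset.mem_univ j) (Finset.mem_univ j') hne
    beta_reduce at h2
    omega
  subst hjj
  have hle := Finset.single_le_sum (f := fun j => (Q.get j).count t)
      (fun _ _ => Nat.zero_le _) (Finset.mem_univ j)
  beta_reduce at hle
  exact ⟨rfl, count_one_unique (by omega) hp hp'⟩

private lemma occ_two {V : Type*} [DecidableEq V] {Q : List (List V)} {t : V}
    (h : Q.flatten.count t ≠ 1) {j : Fin Q.length} {p : ℕ}
    (hp : (Q.get j)[p]? = some t) :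
    ∃ (j' : Fin Q.length) (p' : ℕ), (j' ≠ j ∨ p' ≠ p) ∧ (Q.get j')[p']? = some t := by
  have hsum := count_flatten_fin Q t
  have hj : 0 < (Q.get j).count t := List.count_pos_iff.mpr (get?_mem' hp)
  have hjle := Finset.single_le_sum (f := fun j => (Q.get j).count t)
      (fun _ _ => Nat.zero_le _) (Finset.mem_univ j)
  beta_reduce at hjle
  have h2 : 2 ≤ Q.flatten.count t := by omega
  by_cases hc : 2 ≤ (Q.get j).count t
  · obtain ⟨p₁, p₂, hne, h₁, h₂⟩ := exists_two_of_count hc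
    by_cases hp₁ : p₁ = p
    · exact ⟨j, p₂, Or.inr (by omega), h₂⟩
    · exact ⟨j, p₁, Or.inr hp₁, h₁⟩
  · have hex : ∃ j', j' ≠ j ∧ 0 < (Q.get j').count t := by
      by_contra hcon
      push_neg at hcon
      have hs : ∑ j' : Fin Q.length, (Q.get j').count t = (Q.get j).count t :=
        Finset.sum_eq_single j (fun b _ hb => by have := hcon b hb; omega) (by simp)
      omega
    obtain ⟨j', hne, hpos⟩ := hex
    obtain ⟨p', hp'⟩ := mem_get?' (List.count_pos_iff.mp hpos)
    exact ⟨j', p', Or.inl hne, hp'⟩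

/-- Let `Q` be a set of sequences containing at least one item in total
with `types(Q) = V`, and let `(v_0, …, v_r)` be any path in the state digraph from the
initial state to the final state, where `r = n₁ + … + n_k`. Then the sequence of bags
`(active(v_1), …, active(v_r))` is a directed path-decomposition of `g(Q)`. -/
theorem stmt18 {V : Type*} [Fintype V] [DecidableEq V]
    (Q : List (List V)) (hall : ∀ v : V, ∃ q ∈ Q, v ∈ q) (hne : 1 ≤ totalLen Q)
    (P : ℕ → Fin Q.length → ℕ) (hP : IsStatePath Q P) :
    IsDPD (GArc Q)
      ((List.range (totalLen Q)).map fun i => activeFinset Q (P (i + 1))) := by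
  classical
  obtain ⟨h0, hr, hstep⟩ := hP
  set r := totalLen Q with hrdef
  set X := (List.range r).map (fun i => activeFinset Q (P (i + 1))) with hX
  have hlen : X.length = r := by simp [hX]
  -- basic step facts
  have step_mono : ∀ i < r, ∀ j : Fin Q.length, P i j ≤ P (i+1) j ∧ P (i+1) j ≤ P i j + 1 := by
    intro i hi j
    obtain ⟨j₀, hj₀, hother⟩ := hstep i hi
    by_cases hjj : j = j₀
    · subst hjj; omega
    · rw [hother j hjj]; omega
  have mono : ∀ i i' : ℕ, i ≤ i' → i' ≤ r → ∀ j : Fin Q.length, P i j ≤ P i' j := by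
    intro i i' hii hi'r j
    induction i' with
    | zero =>
      have : i = 0 := by omega
      subst this; exact le_rfl
    | succ n ih =>
      rcases Nat.lt_or_ge i (n+1) with hlt | hge
      · have h1 := ih (by omega) (by omega)
        have h2 := (step_mono n (by omega) j).1
        omega
      · have : i = n + 1 := by omega
        subst this; exact le_rfl
  -- scan time existence
  have scanEx : ∀ (j : Fin Q.length) (p : ℕ), p < (Q.get j).length →
      ∃ i, i < r ∧ P i j = p ∧ P (i+1) j = p + 1 := by
    intro j p hp
    have hex : ∃ i, i ≤ r ∧ p < P i j := ⟨r, le_rfl, by rw [hr j]; exact hp⟩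
    have hfs := Nat.find_spec hex
    have hne0 : Nat.find hex ≠ 0 := by
      intro hz; rw [hz, h0 j] at hfs; omega
    have hm1 : Nat.find hex = (Nat.find hex - 1) + 1 := by omega
    have hmlt : Nat.find hex - 1 < Nat.find hex := by omega
    have hmmin := Nat.find_min hex hmlt
    push_neg at hmmin
    have hmr : Nat.find hex - 1 < r := by omega
    have hmle : P (Nat.find hex - 1) j ≤ p := hmmin (by omega)
    have hsm := step_mono (Nat.find hex - 1) hmr j
    rw [hm1] at hfs
    exact ⟨Nat.find hex - 1, hmr, by omega, by omega⟩
  -- scan uniqueness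
  have scanUniq : ∀ (j : Fin Q.length) (p i i' : ℕ), i < r → i' < r →
      P i j = p → P (i+1) j = p+1 → P i' j = p → P (i'+1) j = p+1 → i = i' := by
    have aux : ∀ (j : Fin Q.length) (p i i' : ℕ), i' < r →
        P (i+1) j = p+1 → P i' j = p → i < i' → False := by
      intro j p i i' hi' h2 h3 hlt
      have := mono (i+1) i' (by omega) (by omega) j
      omega
    intro j p i i' hi hi' h1 h2 h3 h4
    rcases lt_trichotomy i i' with h | h | h
    · exact absurd (aux j p i i' hi' h2 h3 h) (fun h => h)
    · exact h
    · exact absurd (aux j p i' i hi h4 h1 h) (fun h => h)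
  -- a single step increments only one coordinate
  have stepUniq : ∀ i < r, ∀ (j j' : Fin Q.length),
      P (i+1) j = P i j + 1 → P (i+1) j' = P i j' + 1 → j = j' := by
    intro i hi j j' hj hj'
    obtain ⟨j₀, hj₀, hother⟩ := hstep i hi
    have e1 : j = j₀ := by by_contra hcon; rw [hother j hcon] at hj; omega
    have e2 : j' = j₀ := by by_contra hcon; rw [hother j' hcon] at hj'; omega
    rw [e1, e2]
  -- bag access
  have hget : ∀ (i : Fin X.length), X.get i = activeFinset Q (P (i.val + 1)) := by
    intro i
    have hi : i.val < r := by have := i.isLt; omega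
    simp [hX, List.get_eq_getElem, List.getElem_map, List.getElem_range]
  have memActive : ∀ (m : ℕ) (t : V),
      t ∈ activeFinset Q (P (m+1)) ↔ t ∈ activeSet Q (P (m+1)) := by
    intro m t
    exact Set.Finite.mem_toFinset _
  refine ⟨?_, ?_, ?_⟩
  · -- cover
    intro v
    have cover2 : ∀ (jA : Fin Q.length) (pA iA : ℕ) (jB : Fin Q.length) (pB iB : ℕ),
        iA < iB → iB < r → P (iA+1) jA = pA + 1 → P iB jB = pB →
        (Q.get jA)[pA]? = some v → (Q.get jB)[pB]? = some v →
        ∃ B ∈ X, v ∈ B := by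
      intro jA pA iA jB pB iB hAB hBr hA2 hB1 hoA hoB
      refine ⟨activeFinset Q (P (iA+1)),
        List.mem_map.mpr ⟨iA, List.mem_range.mpr (by omega), rfl⟩, ?_⟩
      rw [memActive]
      simp only [activeSet, Set.mem_setOf_eq]
      left
      refine ⟨⟨jA, pA, by omega, hoA⟩, ⟨jB, pB, ?_, hoB⟩⟩
      have := mono (iA+1) iB (by omega) (by omega) jB
      omega
    obtain ⟨q, hq, hv⟩ := hall v
    obtain ⟨j, hj⟩ := List.mem_iff_get.mp hq
    have hvj : v ∈ Q.get j := hj ▸ hv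
    obtain ⟨p, hp⟩ := mem_get?' hvj
    have hplen : p < (Q.get j).length := (List.getElem?_eq_some_iff.mp hp).1
    by_cases hc : Q.flatten.count v = 1
    · obtain ⟨i, hir, hi1, hi2⟩ := scanEx j p hplen
      refine ⟨activeFinset Q (P (i+1)),
        List.mem_map.mpr ⟨i, List.mem_range.mpr hir, rfl⟩, ?_⟩
      rw [memActive]
      simp only [activeSet, Set.mem_setOf_eq]
      exact Or.inr ⟨j, p, by omega, hp, hc⟩
    · obtain ⟨j', p', hdiff, hp'⟩ := occ_two hc hp
      have hplen' : p' < (Q.get j').length := (List.getElem?_eq_some_iff.mp hp').1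
      obtain ⟨i, hir, hi1, hi2⟩ := scanEx j p hplen
      obtain ⟨i', hir', hi1', hi2'⟩ := scanEx j' p' hplen'
      have hii : i ≠ i' := by
        intro he
        rw [← he] at hi1' hi2'
        have hjj := stepUniq i hir j j' (by omega) (by omega)
        rcases hdiff with hd | hd
        · exact hd hjj.symm
        · rw [hjj] at hi1; omega
      rcases Nat.lt_or_ge i i' with hlt | hge
      · exact cover2 j p i j' p' i' hlt hir' hi2 hi1' hp hp'
      · exact cover2 j' p' i' j p i (by omega) hir hi2' hi1 hp' hp
  · -- arcs
    rintro u v ⟨huv, q, hq, l₁, l₂, l₃, hq'⟩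
    obtain ⟨j, hj⟩ := List.mem_iff_get.mp hq
    have hqj : Q.get j = l₁ ++ u :: (l₂ ++ v :: l₃) := by rw [hj, hq']
    have hqu : (Q.get j)[l₁.length]? = some u := by rw [hqj]; exact getq_mid _ _ _
    have hqv : (Q.get j)[(l₁ ++ u :: l₂).length]? = some v := by
      have ha : l₁ ++ u :: (l₂ ++ v :: l₃) = (l₁ ++ u :: l₂) ++ v :: l₃ := by simp
      rw [hqj, ha]; exact getq_mid _ _ _
    have hpuv : l₁.length < (l₁ ++ u :: l₂).length := by
      simp [List.length_append]
    have hpulen : l₁.length < (Q.get j).length := (List.getElem?_eq_some_iff.mp hqu).1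
    have hpvlen : (l₁ ++ u :: l₂).length < (Q.get j).length := (List.getElem?_eq_some_iff.mp hqv).1
    obtain ⟨iu, hiur, hiu1, hiu2⟩ := scanEx j l₁.length hpulen
    obtain ⟨iv, hivr, hiv1, hiv2⟩ := scanEx j (l₁ ++ u :: l₂).length hpvlen
    have hiuv : iu < iv := by
      by_contra hcon
      push_neg at hcon
      have := mono iv iu hcon (by omega) j
      omega
    -- earliest scan among occurrences of u
    have hexU : ∃ n, ∃ (j' : Fin Q.length) (p' : ℕ),
        (Q.get j')[p']? = some u ∧ P n j' = p' ∧ P (n+1) j' = p' + 1 :=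
      ⟨iu, j, l₁.length, hqu, hiu1, hiu2⟩
    obtain ⟨jA, pA, hoccA, hA1, hA2⟩ := Nat.find_spec hexU
    set mu := Nat.find hexU with hmudef
    have hmu_le : mu ≤ iu := Nat.find_min' hexU ⟨j, l₁.length, hqu, hiu1, hiu2⟩
    have hmur : mu < r := by omega
    have humem : u ∈ activeFinset Q (P (mu+1)) := by
      rw [memActive]
      simp only [activeSet, Set.mem_setOf_eq]
      by_cases hcu : Q.flatten.count u = 1
      · exact Or.inr ⟨jA, pA, by omega, hoccA, hcu⟩
      · obtain ⟨jB, pB, hdiff, hoccB⟩ := occ_two hcu hoccA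
        have hpBlen : pB < (Q.get jB).length := (List.getElem?_eq_some_iff.mp hoccB).1
        obtain ⟨iB, hiBr, hiB1, hiB2⟩ := scanEx jB pB hpBlen
        have hmuB : mu ≤ iB := Nat.find_min' hexU ⟨jB, pB, hoccB, hiB1, hiB2⟩
        have hneq : mu ≠ iB := by
          intro he
          rw [← he] at hiB1 hiB2
          have hjj := stepUniq mu hmur jA jB (by omega) (by omega)
          rcases hdiff with hd | hd
          · exact hd hjj.symm
          · rw [← hjj] at hiB1; omega
        left
        refine ⟨⟨jA, pA, by omega, hoccA⟩, ⟨jB, pB, ?_, hoccB⟩⟩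
        have := mono (mu+1) iB (by omega) (by omega) jB
        omega
    -- latest scan among occurrences of v
    set predV : ℕ → Prop := fun n => ∃ (j' : Fin Q.length) (p' : ℕ),
        (Q.get j')[p']? = some v ∧ P n j' = p' ∧ P (n+1) j' = p' + 1 with hpredV
    have hpredViv : predV iv := ⟨j, (l₁ ++ u :: l₂).length, hqv, hiv1, hiv2⟩
    set mv := Nat.findGreatest predV (r-1) with hmvdef
    have hiv_le : iv ≤ mv := Nat.le_findGreatest (by omega) hpredViv
    have hmv_le : mv ≤ r - 1 := Nat.findGreatest_le _
    have hmvr : mv < r := by omega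
    have hspecV : predV mv := Nat.findGreatest_spec (by omega : iv ≤ r-1) hpredViv
    obtain ⟨jC, pC, hoccC, hC1, hC2⟩ := hspecV
    by_cases hcv : Q.flatten.count v = 1
    · refine ⟨⟨mu, by omega⟩, ⟨mv, by omega⟩, by
        simp only [Fin.mk_le_mk]; omega, ?_, ?_⟩
      · rw [hget]; exact humem
      · rw [hget, memActive]
        simp only [activeSet, Set.mem_setOf_eq]
        exact Or.inr ⟨jC, pC, by omega, hoccC, hcv⟩
    · obtain ⟨jD, pD, hdiff, hoccD⟩ := occ_two hcv hoccC
      have hpDlen : pD < (Q.get jD).length := (List.getElem?_eq_some_iff.mp hoccD).1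
      obtain ⟨iD, hiDr, hiD1, hiD2⟩ := scanEx jD pD hpDlen
      have hiD_le : iD ≤ mv := Nat.le_findGreatest (by omega) ⟨jD, pD, hoccD, hiD1, hiD2⟩
      have hneq : iD ≠ mv := by
        intro he
        rw [he] at hiD1 hiD2
        have hjj := stepUniq mv hmvr jC jD (by omega) (by omega)
        rcases hdiff with hd | hd
        · exact hd hjj.symm
        · rw [← hjj] at hiD1; omega
      have hmv1 : mv - 1 + 1 = mv := by omega
      refine ⟨⟨mu, by omega⟩, ⟨mv - 1, by omega⟩, by
        simp only [Fin.mk_le_mk]; omega, ?_, ?_⟩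
      · rw [hget]; exact humem
      · rw [hget, memActive]
        simp only [activeSet, Set.mem_setOf_eq]
        left
        simp only [hmv1]
        refine ⟨⟨jD, pD, ?_, hoccD⟩, ⟨jC, pC, by omega, hoccC⟩⟩
        have := mono (iD+1) mv (by omega) (by omega) jD
        omega
  · -- connectivity
    intro t i j m him hmj hti htj
    rw [hget, memActive] at hti htj
    rw [hget, memActive]
    simp only [activeSet, Set.mem_setOf_eq] at hti htj ⊢
    have hiv : i.val < r := by have := i.isLt; omega
    have hjv : j.val < r := by have := j.isLt; omega
    have hmv : m.val < r := by have := m.isLt; omega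
    have him' : (i : ℕ) ≤ (m : ℕ) := him
    have hmj' : (m : ℕ) ≤ (j : ℕ) := hmj
    by_cases hc : Q.flatten.count t = 1
    · have hright : ∀ (n : ℕ),
          ((∃ (j' : Fin Q.length) (p : ℕ), p < P (n+1) j' ∧ (Q.get j')[p]? = some t) ∧
           (∃ (j' : Fin Q.length) (p : ℕ), P (n+1) j' ≤ p ∧ (Q.get j')[p]? = some t)) ∨
          (∃ (j' : Fin Q.length) (p : ℕ), p + 1 = P (n+1) j' ∧ (Q.get j')[p]? = some t ∧
           Q.flatten.count t = 1) →
          ∃ (j' : Fin Q.length) (p' : ℕ), p' + 1 = P (n+1) j' ∧ (Q.get j')[p']? = some t := by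
        intro n hmem
        rcases hmem with ⟨⟨j₁, p₁, h₁, ho₁⟩, ⟨j₂, p₂, h₂, ho₂⟩⟩ | ⟨j₁, p₁, h₁, ho₁, _⟩
        · obtain ⟨hje, hpe⟩ := occ_unique hc ho₁ ho₂
          rw [← hje] at h₂
          omega
        · exact ⟨j₁, p₁, h₁, ho₁⟩
      obtain ⟨j₁, p₁, e₁, ho₁⟩ := hright i.val hti
      obtain ⟨j₂, p₂, e₂, ho₂⟩ := hright j.val htj
      obtain ⟨hje, hpe⟩ := occ_unique hc ho₁ ho₂
      rw [← hje] at e₂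
      right
      refine ⟨j₁, p₁, ?_, ho₁, hc⟩
      have h1 := mono (i.val+1) (m.val+1) (by omega) (by omega) j₁
      have h2 := mono (m.val+1) (j.val+1) (by omega) (by omega) j₁
      omega
    · have hti' := hti.resolve_right (fun ⟨_, _, _, _, hc1⟩ => hc hc1)
      have htj' := htj.resolve_right (fun ⟨_, _, _, _, hc1⟩ => hc hc1)
      obtain ⟨⟨j₁, p₁, h₁, ho₁⟩, -⟩ := hti'
      obtain ⟨-, ⟨j₂, p₂, h₂, ho₂⟩⟩ := htj'
      left
      refine ⟨⟨j₁, p₁, ?_, ho₁⟩, ⟨j₂, p₂, ?_, ho₂⟩⟩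
      · have := mono (i.val+1) (m.val+1) (by omega) (by omega) j₁
        omega
      · have := mono (m.val+1) (j.val+1) (by omega) (by omega) j₂
        omega
end
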